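/- arXiv:2502.04007 — 2 statements merged into one kernel-verified Lean document; each statement's English description precedes it below -/
import Mathlib

section
/- Let s ≥ 3/2 be a real number and N ≥ 1 an integer. There exists a constant C > 0 (depending only on s and N) such that for all functions f₁,…,f_N : ℤ → ℂ, ‖ k ↦ Σ_{(k₁,…,k_N)∈ℤ^N, k₁+⋯+k_N=k} ⟨k_max⟩³ · Π_{l=1}^N |f_l(k_l)| ‖_{ℓ²_{s−3}} ≤ C · Π_{l=1}^N ‖f_l‖_{ℓ²_s}, where k_max = max_{1≤j≤N}|k_j|. -/
open scoped BigOperators ENNReal NNReal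

/-- The Japanese bracket `⟨k⟩ = (1+k²)^{1/2}`. -/
noncomputable def jbr (k : ℤ) : ℝ := Real.sqrt (1 + (k : ℝ) ^ 2)

/-- The weighted `ℓ²_s` norm of a nonnegative sequence, valued in `ℝ≥0∞`. -/
noncomputable def wnorm (s : ℝ) (g : ℤ → ℝ≥0∞) : ℝ≥0∞ :=
  (∑' k : ℤ, ENNReal.ofReal (jbr k ^ (2 * s)) * g k ^ 2) ^ ((1 : ℝ) / 2)

/-- The `ℓ²_s` norm of a complex sequence (the `H^s` norm on the Fourier side). -/
noncomputable def hnorm (s : ℝ) (f : ℤ → ℂ) : ℝ≥0∞ :=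
  wnorm s fun k => (‖f k‖₊ : ℝ≥0∞)

namespace St10

open Finset

noncomputable def Jb (k : ℤ) : ℝ≥0∞ := ENNReal.ofReal (jbr k)

lemma jbr_pos (k : ℤ) : 0 < jbr k := Real.sqrt_pos.2 (by positivity)

lemma one_le_jbr (k : ℤ) : 1 ≤ jbr k := by
  rw [show (1:ℝ) = Real.sqrt 1 by simp [Real.sqrt_one]]
  exact Real.sqrt_le_sqrt (by nlinarith [sq_nonneg ((k:ℝ))])

lemma jbr_nonneg (k : ℤ) : 0 ≤ jbr k := (jbr_pos k).le

lemma jbr_sq (k : ℤ) : jbr k ^ 2 = 1 + (k:ℝ)^2 := Real.sq_sqrt (by positivity)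

lemma jbr_mono {a b : ℤ} (h : |(a:ℝ)| ≤ |(b:ℝ)|) : jbr a ≤ jbr b := by
  apply Real.sqrt_le_sqrt
  nlinarith [abs_nonneg ((a:ℝ)), sq_abs ((a:ℝ)), sq_abs ((b:ℝ))]

lemma jbr_natAbs (k : ℤ) : jbr ((k.natAbs : ℤ)) = jbr k := by
  unfold jbr
  congr 2
  push_cast [Nat.cast_natAbs]
  rw [sq_abs]

lemma jbr_add_le (x y : ℤ) : jbr (x + y) ≤ jbr x + jbr y := by
  have hx := Real.sq_sqrt (show (0:ℝ) ≤ 1 + (x:ℝ)^2 by positivity)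
  have hx0 := Real.sqrt_nonneg (1 + (x:ℝ)^2)
  have h1 : jbr (x+y) ≤ jbr x + |(y:ℝ)| := by
    unfold jbr
    rw [show ((x + y : ℤ) : ℝ) = (x:ℝ) + (y:ℝ) by push_cast; ring]
    rw [show Real.sqrt (1 + (x:ℝ)^2) + |(y:ℝ)| = Real.sqrt ((Real.sqrt (1 + (x:ℝ)^2) + |(y:ℝ)|)^2) from (Real.sqrt_sq (by positivity)).symm]
    apply Real.sqrt_le_sqrt
    have habs : (x:ℝ) * y ≤ |(x:ℝ)| * |(y:ℝ)| := by
      rw [← abs_mul]; exact le_abs_self _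
    have hxle : |(x:ℝ)| ≤ Real.sqrt (1 + (x:ℝ)^2) := by
      rw [show |(x:ℝ)| = Real.sqrt (|(x:ℝ)|^2) from (Real.sqrt_sq (abs_nonneg _)).symm]
      apply Real.sqrt_le_sqrt; rw [sq_abs]; nlinarith
    nlinarith [abs_nonneg ((y:ℝ)), sq_abs ((y:ℝ)), mul_le_mul_of_nonneg_right hxle (abs_nonneg ((y:ℝ)))]
  have h2 : |(y:ℝ)| ≤ jbr y := by
    rw [show |(y:ℝ)| = Real.sqrt (|(y:ℝ)|^2) from (Real.sqrt_sq (abs_nonneg _)).symm]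
    apply Real.sqrt_le_sqrt; rw [sq_abs]; nlinarith
  linarith

lemma jbr_le_two_mul {z y : ℤ} (h : |(z:ℝ)| ≤ 2 * |(y:ℝ)|) : jbr z ≤ 2 * jbr y := by
  have h4 : Real.sqrt 4 = 2 := by
    rw [show (4:ℝ) = 2^2 by norm_num, Real.sqrt_sq (by norm_num)]
  calc jbr z ≤ Real.sqrt (4 * (1 + (y:ℝ)^2)) := by
        apply Real.sqrt_le_sqrt
        nlinarith [sq_abs ((z:ℝ)), sq_abs ((y:ℝ)), abs_nonneg ((z:ℝ)), abs_nonneg ((y:ℝ))]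
    _ = 2 * jbr y := by
        rw [Real.sqrt_mul (by norm_num), h4]; rfl

lemma jbr_zero : jbr 0 = 1 := by simp [jbr]

-- ENNReal level
lemma Jb_ne_top (k : ℤ) : Jb k ≠ ⊤ := ENNReal.ofReal_ne_top

lemma one_le_Jb (k : ℤ) : 1 ≤ Jb k := by
  rw [Jb, ← ENNReal.ofReal_one]
  exact ENNReal.ofReal_le_ofReal (one_le_jbr k)

lemma Jb_ne_zero (k : ℤ) : Jb k ≠ 0 := by
  intro h
  exact absurd (h ▸ one_le_Jb k) (by simp)

lemma Jb_zero : Jb 0 = 1 := by simp [Jb, jbr_zero]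

lemma Jb_rpow (k : ℤ) (t : ℝ) : ENNReal.ofReal (jbr k ^ t) = Jb k ^ t :=
  (ENNReal.ofReal_rpow_of_pos (jbr_pos k)).symm

lemma Jb_rpow_add (k : ℤ) (a b : ℝ) : Jb k ^ (a + b) = Jb k ^ a * Jb k ^ b :=
  ENNReal.rpow_add a b (Jb_ne_zero k) (Jb_ne_top k)

lemma Jb_exp_mono (k : ℤ) {a b : ℝ} (h : a ≤ b) : Jb k ^ a ≤ Jb k ^ b :=
  ENNReal.rpow_le_rpow_of_exponent_le (one_le_Jb k) h

lemma Jb_rpow_le_one (k : ℤ) {t : ℝ} (ht : t ≤ 0) : Jb k ^ t ≤ 1 := by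
  have := Jb_exp_mono k ht
  simpa using this

lemma Jb_rpow_ne_top (k : ℤ) {t : ℝ} (ht : 0 ≤ t) : Jb k ^ t ≠ ⊤ :=
  ENNReal.rpow_ne_top_of_nonneg ht (Jb_ne_top k)

lemma one_le_Jb_rpow (k : ℤ) {t : ℝ} (ht : 0 ≤ t) : 1 ≤ Jb k ^ t := by
  have := Jb_exp_mono k ht
  simpa using this

lemma Jb_natAbs (k : ℤ) : Jb ((k.natAbs : ℤ)) = Jb k := by
  unfold Jb; rw [jbr_natAbs]

lemma Jb_mono {a b : ℤ} (h : |(a:ℝ)| ≤ |(b:ℝ)|) : Jb a ≤ Jb b :=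
  ENNReal.ofReal_le_ofReal (jbr_mono h)

lemma Jb_add_le (x y : ℤ) : Jb (x + y) ≤ Jb x + Jb y := by
  rw [Jb, Jb, Jb, ← ENNReal.ofReal_add (jbr_nonneg x) (jbr_nonneg y)]
  exact ENNReal.ofReal_le_ofReal (jbr_add_le x y)

lemma Jb_le_two_mul {z y : ℤ} (h : |(z:ℝ)| ≤ 2 * |(y:ℝ)|) : Jb z ≤ 2 * Jb y := by
  rw [Jb, Jb, show (2:ℝ≥0∞) = ENNReal.ofReal 2 by simp [ENNReal.ofReal_ofNat],
    ← ENNReal.ofReal_mul (by norm_num)]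
  exact ENNReal.ofReal_le_ofReal (jbr_le_two_mul h)

/-- key binary splitting: `⟨k-b⟩ ≤ 2 max(⟨k⟩,⟨b⟩)` -/
lemma Jb_sub_le (k b : ℤ) : Jb (k - b) ≤ 2 * (Jb k ⊔ Jb b) := by
  rcases le_total |(k:ℝ)| |(b:ℝ)| with h | h
  · calc Jb (k - b) ≤ 2 * Jb b := Jb_le_two_mul (by push_cast; calc |(k:ℝ) - (b:ℝ)| ≤ |(k:ℝ)| + |(b:ℝ)| := abs_sub _ _
          _ ≤ 2 * |(b:ℝ)| := by linarith)
      _ ≤ 2 * (Jb k ⊔ Jb b) := by gcongr; exact le_sup_right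
  · calc Jb (k - b) ≤ 2 * Jb k := Jb_le_two_mul (by push_cast; calc |(k:ℝ) - (b:ℝ)| ≤ |(k:ℝ)| + |(b:ℝ)| := abs_sub _ _
          _ ≤ 2 * |(k:ℝ)| := by linarith)
      _ ≤ 2 * (Jb k ⊔ Jb b) := by gcongr; exact le_sup_left

lemma sup_rpow_le {x y : ℝ≥0∞} {t : ℝ} : (x ⊔ y) ^ t ≤ x ^ t + y ^ t := by
  rcases le_total x y with h | h
  · rw [sup_eq_right.2 h]; exact le_add_self
  · rw [sup_eq_left.2 h]; exact le_add_right le_rfl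

lemma ennreal_sq_sqrt (x : ℝ≥0∞) : (x ^ 2) ^ ((1:ℝ)/2) = x := by
  rw [← ENNReal.rpow_natCast x 2, ← ENNReal.rpow_mul]
  norm_num


section CS
open MeasureTheory

/-- Cauchy–Schwarz for `ℝ≥0∞`-valued sums over `ℤ`. -/
lemma tsum_cs (F G : ℤ → ℝ≥0∞) :
    ∑' k, F k * G k ≤ (∑' k, F k ^ 2) ^ ((1:ℝ)/2) * (∑' k, G k ^ 2) ^ ((1:ℝ)/2) := by
  have hh := ENNReal.lintegral_mul_le_Lp_mul_Lq (Measure.count : Measure ℤ)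
    (p := 2) (q := 2) ⟨by norm_num, by norm_num, by norm_num⟩
    (measurable_of_countable F).aemeasurable (measurable_of_countable G).aemeasurable
  rw [lintegral_count, lintegral_count, lintegral_count] at hh
  calc ∑' k, F k * G k ≤ (∑' k, F k ^ (2:ℝ)) ^ ((1:ℝ)/2) * (∑' k, G k ^ (2:ℝ)) ^ ((1:ℝ)/2) := by
        convert hh using 3 <;> norm_num
    _ = (∑' k, F k ^ 2) ^ ((1:ℝ)/2) * (∑' k, G k ^ 2) ^ ((1:ℝ)/2) := by
        congr 2 <;> · apply tsum_congr; intro k; rw [← ENNReal.rpow_natCast]; norm_num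

/-- Minkowski inequality for a `tsum` of functions, in `ℓ²(ℤ)`. -/
lemma l2_tsum {β : Type*} (H : β → ℤ → ℝ≥0∞) :
    (∑' k, (∑' b, H b k) ^ 2) ^ ((1:ℝ)/2) ≤ ∑' b, (∑' k, (H b k) ^ 2) ^ ((1:ℝ)/2) := by
  set Nb := fun b => (∑' k, (H b k) ^ 2) ^ ((1:ℝ)/2) with hNb
  have key : ∑' k, (∑' b, H b k) ^ 2 ≤ (∑' b, Nb b) ^ 2 := by
    have e1 : ∀ k, (∑' b, H b k) ^ 2 = ∑' b, ∑' b', H b k * H b' k := by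
      intro k
      rw [sq, ← ENNReal.tsum_mul_right]
      exact tsum_congr fun b => (ENNReal.tsum_mul_left).symm
    calc ∑' k, (∑' b, H b k) ^ 2 = ∑' k, ∑' b, ∑' b', H b k * H b' k := tsum_congr e1
      _ = ∑' b, ∑' b', ∑' k, H b k * H b' k := by
          rw [ENNReal.tsum_comm]
          exact tsum_congr fun b => ENNReal.tsum_comm
      _ ≤ ∑' b, ∑' b', Nb b * Nb b' := by
          apply ENNReal.tsum_le_tsum; intro b
          apply ENNReal.tsum_le_tsum; intro b'
          exact tsum_cs _ _
      _ = (∑' b, Nb b) ^ 2 := by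
          rw [sq, ← ENNReal.tsum_mul_right]
          exact tsum_congr fun b => ENNReal.tsum_mul_left
  calc (∑' k, (∑' b, H b k) ^ 2) ^ ((1:ℝ)/2) ≤ ((∑' b, Nb b) ^ 2) ^ ((1:ℝ)/2) :=
        ENNReal.rpow_le_rpow key (by norm_num)
    _ = ∑' b, Nb b := ennreal_sq_sqrt _

/-- finite-sum version of Minkowski. -/
lemma l2_finset {β : Type*} (I : Finset β) (H : β → ℤ → ℝ≥0∞) :
    (∑' k, (∑ b ∈ I, H b k) ^ 2) ^ ((1:ℝ)/2) ≤ ∑ b ∈ I, (∑' k, (H b k) ^ 2) ^ ((1:ℝ)/2) := by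
  have h1 : ∀ k, ∑ b ∈ I, H b k = ∑' b : {x // x ∈ I}, H b.1 k := by
    intro k
    exact (I.tsum_subtype fun b => H b k).symm
  have h2 : ∑ b ∈ I, (∑' k, (H b k) ^ 2) ^ ((1:ℝ)/2)
      = ∑' b : {x // x ∈ I}, (∑' k, (H b.1 k) ^ 2) ^ ((1:ℝ)/2) :=
    (I.tsum_subtype fun b => (∑' k, (H b k) ^ 2) ^ ((1:ℝ)/2)).symm
  rw [h2]
  calc (∑' k, (∑ b ∈ I, H b k) ^ 2) ^ ((1:ℝ)/2)
      = (∑' k, (∑' b : {x // x ∈ I}, H b.1 k) ^ 2) ^ ((1:ℝ)/2) := by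
        congr 1; exact tsum_congr fun k => by rw [h1]
    _ ≤ _ := l2_tsum _

end CS

section PiFub

/-- Explicit equivalence `(Fin (n+1) → ℤ) ≃ ℤ × (Fin n → ℤ)`. -/
def finSplit (n : ℕ) : (Fin (n+1) → ℤ) ≃ ℤ × (Fin n → ℤ) where
  toFun w := (w 0, fun i => w i.succ)
  invFun p := Fin.cons p.1 p.2
  left_inv w := by
    funext i
    refine Fin.cases ?_ ?_ i <;> simp
  right_inv p := by
    refine Prod.ext ?_ ?_ <;> simp

/-- Fubini for products over `Fin n`. -/
lemma tsum_pi_fin : ∀ (n : ℕ) (u : Fin n → ℤ → ℝ≥0∞),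
    ∑' w : Fin n → ℤ, ∏ i, u i (w i) = ∏ i, ∑' a, u i a := by
  intro n
  induction n with
  | zero =>
    intro u
    rw [tsum_eq_single (fun i => i.elim0)]
    · simp
    · intro b hb; exact absurd (Subsingleton.elim b _) hb
  | succ n ih =>
    intro u
    have h1 : ∑' w : Fin (n+1) → ℤ, ∏ i, u i (w i)
        = ∑' p : ℤ × (Fin n → ℤ), u 0 p.1 * ∏ i : Fin n, u i.succ (p.2 i) := by
      rw [← Equiv.tsum_eq (finSplit n) (fun p : ℤ × (Fin n → ℤ) =>
        u 0 p.1 * ∏ i : Fin n, u i.succ (p.2 i))]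
      exact tsum_congr fun w => by rw [Fin.prod_univ_succ]; rfl
    rw [h1, ENNReal.tsum_prod']
    calc ∑' a, ∑' W : Fin n → ℤ, u 0 a * ∏ i : Fin n, u i.succ (W i)
        = ∑' a, u 0 a * ∑' W : Fin n → ℤ, ∏ i : Fin n, u i.succ (W i) :=
          tsum_congr fun a => ENNReal.tsum_mul_left
      _ = (∑' a, u 0 a) * ∑' W : Fin n → ℤ, ∏ i : Fin n, u i.succ (W i) := ENNReal.tsum_mul_right
      _ = (∑' a, u 0 a) * ∏ i : Fin n, ∑' a, u i.succ a := by rw [ih]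
      _ = ∏ i, ∑' a, u i a := by rw [Fin.prod_univ_succ]

/-- Fubini for products over any finite index type. -/
lemma tsum_pi_prod {ι : Type*} [Fintype ι] (u : ι → ℤ → ℝ≥0∞) :
    ∑' w : ι → ℤ, ∏ i, u i (w i) = ∏ i, ∑' a, u i a := by
  classical
  have h1 : ∑' w : ι → ℤ, ∏ i, u i (w i)
      = ∑' w' : Fin (Fintype.card ι) → ℤ,
          ∏ i' : Fin (Fintype.card ι), u ((Fintype.equivFin ι).symm i') (w' i') := by
    rw [← Equiv.tsum_eq (Equiv.arrowCongr (Fintype.equivFin ι).symm (Equiv.refl ℤ))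
      (fun w => ∏ i, u i (w i))]
    apply tsum_congr; intro w'
    rw [← Equiv.prod_comp (Fintype.equivFin ι).symm
      (fun i => u i ((Equiv.arrowCongr (Fintype.equivFin ι).symm (Equiv.refl ℤ)) w' i))]
    apply Finset.prod_congr rfl; intro i' _
    simp [Equiv.arrowCongr]
  rw [h1, tsum_pi_fin _ (fun i' => u ((Fintype.equivFin ι).symm i'))]
  exact Equiv.prod_comp (Fintype.equivFin ι).symm (fun j => ∑' a, u j a)

end PiFub
end St10



namespace St10

open Finset

section Split

/-- translation equivalence of `ℤ`. -/
def esub (m : ℤ) : ℤ ≃ ℤ where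
  toFun k := k - m
  invFun k := k + m
  left_inv k := by ring
  right_inv k := by ring

/-- reflection equivalence of `ℤ`. -/
def erefl (c : ℤ) : ℤ ≃ ℤ where
  toFun a := c - a
  invFun a := c - a
  left_inv a := by ring
  right_inv a := by ring

variable {ι : Type*} [Fintype ι] [DecidableEq ι]

/-- Split off coordinate `j` from a function `ι → ℤ`. -/
def mySplit (j : ι) : (ι → ℤ) ≃ ℤ × ({i : ι // i ≠ j} → ℤ) where
  toFun v := (v j, fun i' => v i'.1)
  invFun p := fun i => if h : i = j then p.1 else p.2 ⟨i, h⟩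
  left_inv v := by
    funext i
    by_cases h : i = j
    · subst h; simp
    · simp [h]
  right_inv p := by
    refine Prod.ext (by simp) ?_
    funext i'
    simp [i'.2]

lemma mySplit_symm_same (j : ι) (a : ℤ) (w : {i : ι // i ≠ j} → ℤ) :
    (mySplit j).symm (a, w) j = a := dif_pos rfl

lemma mySplit_symm_ne (j : ι) (a : ℤ) (w : {i : ι // i ≠ j} → ℤ) {i : ι} (h : i ≠ j) :
    (mySplit j).symm (a, w) i = w ⟨i, h⟩ := dif_neg h

lemma prod_split_subtype (j : ι) (X : ι → ℝ≥0∞) :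
    ∏ i, X i = X j * ∏ i' : {i : ι // i ≠ j}, X i'.1 := by
  rw [← Finset.mul_prod_erase univ X (mem_univ j)]
  congr 1
  exact Finset.prod_subtype (univ.erase j) (fun x => by simp) (fun i => X i)

lemma sum_split_subtype (j : ι) (X : ι → ℤ) :
    ∑ i, X i = X j + ∑ i' : {i : ι // i ≠ j}, X i'.1 := by
  rw [← Finset.add_sum_erase univ X (mem_univ j)]
  congr 1
  exact Finset.sum_subtype (univ.erase j) (fun x => by simp) (fun i => X i)

lemma sum_mySplit (j : ι) (a : ℤ) (w : {i : ι // i ≠ j} → ℤ) :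
    ∑ i, (mySplit j).symm (a, w) i = a + ∑ i' : {i : ι // i ≠ j}, w i' := by
  rw [sum_split_subtype j, mySplit_symm_same]
  congr 1
  exact Finset.sum_congr rfl (fun i' _ => mySplit_symm_ne j a w i'.2)

lemma prod_mySplit (u : ι → ℤ → ℝ≥0∞) (j : ι) (a : ℤ) (w : {i : ι // i ≠ j} → ℤ) :
    ∏ i, u i ((mySplit j).symm (a, w) i) = u j a * ∏ i' : {i : ι // i ≠ j}, u i'.1 (w i') := by
  rw [prod_split_subtype j (fun i => u i ((mySplit j).symm (a, w) i)), mySplit_symm_same]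
  congr 1
  exact Finset.prod_congr rfl (fun i' _ => by rw [mySplit_symm_ne j a w i'.2])

/-- Reindexing a constrained sum by the values of the coordinates other than `j`. -/
lemma tsum_constrained (F : (ι → ℤ) → ℝ≥0∞) (j : ι) (k : ℤ) :
    ∑' v : {v : ι → ℤ // ∑ i, v i = k}, F v.1
      = ∑' w : {i : ι // i ≠ j} → ℤ, F ((mySplit j).symm (k - ∑ i', w i', w)) := by
  have h0 : ∑' v : {v : ι → ℤ // ∑ i, v i = k}, F v.1
      = ∑' v : ι → ℤ, Set.indicator {v : ι → ℤ | ∑ i, v i = k} F v :=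
    tsum_subtype {v : ι → ℤ | ∑ i, v i = k} F
  rw [h0]
  rw [← Equiv.tsum_eq (mySplit j).symm (fun v => Set.indicator {v : ι → ℤ | ∑ i, v i = k} F v)]
  rw [ENNReal.tsum_prod']
  rw [ENNReal.tsum_comm]
  apply tsum_congr; intro w
  rw [tsum_eq_single (k - ∑ i', w i')]
  · apply Set.indicator_of_mem
    show ∑ i, (mySplit j).symm (k - ∑ i', w i', w) i = k
    rw [sum_mySplit]; ring
  · intro a ha
    apply Set.indicator_of_notMem
    rw [Set.mem_setOf_eq, sum_mySplit]
    intro hc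
    exact ha (by linarith)

/-- Young-type inequality: one `ℓ²` factor at coordinate `j`, the rest in `ℓ¹`. -/
lemma youngN (u : ι → ℤ → ℝ≥0∞) (j : ι) :
    (∑' k : ℤ, (∑' v : {v : ι → ℤ // ∑ i, v i = k}, ∏ i, u i (v.1 i)) ^ 2) ^ ((1:ℝ)/2)
      ≤ (∑' a, (u j a) ^ 2) ^ ((1:ℝ)/2) * ∏ i' : {i : ι // i ≠ j}, ∑' a, u i'.1 a := by
  have hre : ∀ k : ℤ, ∑' v : {v : ι → ℤ // ∑ i, v i = k}, ∏ i, u i (v.1 i)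
      = ∑' w : {i : ι // i ≠ j} → ℤ,
          (∏ i' : {i : ι // i ≠ j}, u i'.1 (w i')) * u j (k - ∑ i', w i') := by
    intro k
    rw [tsum_constrained (fun v => ∏ i, u i (v i)) j k]
    exact tsum_congr fun w => by rw [prod_mySplit, mul_comm]
  calc (∑' k : ℤ, (∑' v : {v : ι → ℤ // ∑ i, v i = k}, ∏ i, u i (v.1 i)) ^ 2) ^ ((1:ℝ)/2)
      = (∑' k : ℤ, (∑' w : {i : ι // i ≠ j} → ℤ,
          (∏ i' : {i : ι // i ≠ j}, u i'.1 (w i')) * u j (k - ∑ i', w i')) ^ 2) ^ ((1:ℝ)/2) := by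
        congr 1; exact tsum_congr fun k => by rw [hre]
    _ ≤ ∑' w : {i : ι // i ≠ j} → ℤ, (∑' k : ℤ,
          ((∏ i' : {i : ι // i ≠ j}, u i'.1 (w i')) * u j (k - ∑ i', w i')) ^ 2) ^ ((1:ℝ)/2) :=
        l2_tsum _
    _ = ∑' w : {i : ι // i ≠ j} → ℤ,
          (∏ i' : {i : ι // i ≠ j}, u i'.1 (w i')) * (∑' a, (u j a) ^ 2) ^ ((1:ℝ)/2) := by
        apply tsum_congr; intro w
        calc (∑' k : ℤ, ((∏ i' : {i : ι // i ≠ j}, u i'.1 (w i')) * u j (k - ∑ i', w i')) ^ 2) ^ ((1:ℝ)/2)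
            = ((∏ i' : {i : ι // i ≠ j}, u i'.1 (w i')) ^ 2
                * ∑' k : ℤ, (u j (k - ∑ i', w i')) ^ 2) ^ ((1:ℝ)/2) := by
              rw [← ENNReal.tsum_mul_left]
              congr 1
              exact tsum_congr fun k => mul_pow _ _ 2
          _ = ((∏ i' : {i : ι // i ≠ j}, u i'.1 (w i')) ^ 2 * ∑' a, (u j a) ^ 2) ^ ((1:ℝ)/2) := by
              have ht : ∑' k : ℤ, (u j (k - ∑ i', w i')) ^ 2 = ∑' a, (u j a) ^ 2 :=
                Equiv.tsum_eq (esub (∑ i', w i')) (fun a => (u j a) ^ 2)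
              rw [ht]
          _ = (∏ i' : {i : ι // i ≠ j}, u i'.1 (w i')) * (∑' a, (u j a) ^ 2) ^ ((1:ℝ)/2) := by
              rw [ENNReal.mul_rpow_of_nonneg _ _ (by norm_num : (0:ℝ) ≤ 1/2), ennreal_sq_sqrt]
    _ = (∑' a, (u j a) ^ 2) ^ ((1:ℝ)/2) * ∏ i' : {i : ι // i ≠ j}, ∑' a, u i'.1 a := by
        rw [ENNReal.tsum_mul_right, mul_comm]
        congr 1
        exact tsum_pi_prod (fun i' : {i : ι // i ≠ j} => u i'.1)

/-- Sup-type bound: two `ℓ²` factors, the rest in `ℓ¹`. -/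
lemma supN (u : ι → ℤ → ℝ≥0∞) {j l : ι} (hlj : l ≠ j) (k : ℤ) :
    (∑' v : {v : ι → ℤ // ∑ i, v i = k}, ∏ i, u i (v.1 i))
      ≤ ((∑' a, (u j a) ^ 2) ^ ((1:ℝ)/2)) * ((∑' a, (u l a) ^ 2) ^ ((1:ℝ)/2)) *
        ∏ i'' : {i' : {i : ι // i ≠ j} // i' ≠ ⟨l, hlj⟩}, ∑' a, u i''.1.1 a := by
  rw [tsum_constrained (fun v => ∏ i, u i (v i)) j k]
  have step1 : (∑' w : {i : ι // i ≠ j} → ℤ, ∏ i, u i ((mySplit j).symm (k - ∑ i', w i', w) i))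
      = ∑' w' : {i' : {i : ι // i ≠ j} // i' ≠ ⟨l, hlj⟩} → ℤ, ∑' a' : ℤ,
          (∏ i'' : {i' : {i : ι // i ≠ j} // i' ≠ ⟨l, hlj⟩}, u i''.1.1 (w' i'')) *
            (u l a' * u j ((k - ∑ i'', w' i'') - a')) := by
    rw [← Equiv.tsum_eq (mySplit (⟨l, hlj⟩ : {i : ι // i ≠ j})).symm
      (fun w => ∏ i, u i ((mySplit j).symm (k - ∑ i', w i', w) i))]
    rw [ENNReal.tsum_prod', ENNReal.tsum_comm]
    apply tsum_congr; intro w'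
    apply tsum_congr; intro a'
    rw [prod_mySplit u j _ _]
    rw [prod_mySplit (fun (i' : {i : ι // i ≠ j}) a => u i'.1 a)
      (⟨l, hlj⟩ : {i : ι // i ≠ j}) a' w']
    rw [sum_mySplit]
    have harith : k - (a' + ∑ i'' : {i' : {i : ι // i ≠ j} // i' ≠ ⟨l, hlj⟩}, w' i'')
        = (k - ∑ i'' : {i' : {i : ι // i ≠ j} // i' ≠ ⟨l, hlj⟩}, w' i'') - a' := by ring
    rw [harith]
    ring
  rw [step1]
  calc ∑' w' : {i' : {i : ι // i ≠ j} // i' ≠ ⟨l, hlj⟩} → ℤ, ∑' a' : ℤ,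
          (∏ i'' : {i' : {i : ι // i ≠ j} // i' ≠ ⟨l, hlj⟩}, u i''.1.1 (w' i'')) *
            (u l a' * u j ((k - ∑ i'', w' i'') - a'))
      ≤ ∑' w' : {i' : {i : ι // i ≠ j} // i' ≠ ⟨l, hlj⟩} → ℤ,
          (∏ i'' : {i' : {i : ι // i ≠ j} // i' ≠ ⟨l, hlj⟩}, u i''.1.1 (w' i'')) *
            ((∑' a, (u l a) ^ 2) ^ ((1:ℝ)/2) * (∑' a, (u j a) ^ 2) ^ ((1:ℝ)/2)) := by
        apply ENNReal.tsum_le_tsum; intro w'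
        rw [ENNReal.tsum_mul_left]
        apply mul_le_mul_right
        calc ∑' a', u l a' * u j ((k - ∑ i'', w' i'') - a')
            ≤ (∑' a, (u l a) ^ 2) ^ ((1:ℝ)/2)
              * (∑' a', (u j ((k - ∑ i'', w' i'') - a')) ^ 2) ^ ((1:ℝ)/2) := tsum_cs _ _
          _ = _ := by
              have ht : ∑' a' : ℤ, (u j ((k - ∑ i'', w' i'') - a')) ^ 2 = ∑' a, (u j a) ^ 2 :=
                Equiv.tsum_eq (erefl (k - ∑ i'', w' i'')) (fun a => (u j a) ^ 2)
              rw [ht]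
    _ = ((∑' a, (u j a) ^ 2) ^ ((1:ℝ)/2)) * ((∑' a, (u l a) ^ 2) ^ ((1:ℝ)/2)) *
        ∏ i'' : {i' : {i : ι // i ≠ j} // i' ≠ ⟨l, hlj⟩}, ∑' a, u i''.1.1 a := by
        rw [ENNReal.tsum_mul_right]
        have hp : (∑' w' : {i' : {i : ι // i ≠ j} // i' ≠ ⟨l, hlj⟩} → ℤ,
            ∏ i'' : {i' : {i : ι // i ≠ j} // i' ≠ ⟨l, hlj⟩}, u i''.1.1 (w' i''))
            = ∏ i'' : {i' : {i : ι // i ≠ j} // i' ≠ ⟨l, hlj⟩}, ∑' a, u i''.1.1 a :=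
          tsum_pi_prod (fun i'' : {i' : {i : ι // i ≠ j} // i' ≠ ⟨l, hlj⟩} => u i''.1.1)
        rw [hp]
        ring

end Split

end St10



namespace St10

open Finset

section Lam

/-- Finiteness of `∑ ⟨k⟩^(-p)` for `p > 1`. -/
lemma lam_ne_top {p : ℝ} (hp : 1 < p) : ∑' k : ℤ, Jb k ^ (-p) ≠ ⊤ := by
  have hnn : ∀ k : ℤ, 0 ≤ jbr k ^ (-p) := fun k => Real.rpow_nonneg (jbr_nonneg k) _
  have hsum : Summable fun k : ℤ => jbr k ^ (-p) := by
    have hG : Summable fun k : ℤ => |(k:ℝ)| ^ (-p) + (if k = 0 then (1:ℝ) else 0) := by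
      apply (Real.summable_abs_int_rpow hp).add
      apply summable_of_ne_finset_zero (s := {0})
      intro b hb
      simp only [Finset.mem_singleton] at hb
      simp [hb]
    apply Summable.of_nonneg_of_le hnn _ hG
    intro k
    by_cases hk : k = 0
    · subst hk
      simp only [if_pos rfl]
      have : jbr 0 ^ (-p) = 1 := by rw [jbr_zero, Real.one_rpow]
      rw [this]
      have : |((0:ℤ):ℝ)| ^ (-p) = 0 := by
        simp [Real.zero_rpow (by linarith : -p ≠ 0)]
      rw [this]; norm_num
    · have h1 : |(k:ℝ)| ≤ jbr k := by
        rw [show |(k:ℝ)| = Real.sqrt (|(k:ℝ)|^2) from (Real.sqrt_sq (abs_nonneg _)).symm]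
        apply Real.sqrt_le_sqrt; rw [sq_abs]; nlinarith
      have h2 : (0:ℝ) < |(k:ℝ)| := by
        simp only [abs_pos, Int.cast_ne_zero]; exact hk
      have := Real.rpow_le_rpow_of_nonpos h2 h1 (by linarith : -p ≤ 0)
      calc jbr k ^ (-p) ≤ |(k:ℝ)| ^ (-p) := this
        _ ≤ |(k:ℝ)| ^ (-p) + (if k = 0 then (1:ℝ) else 0) := by simp [hk]
  have : ∑' k : ℤ, Jb k ^ (-p) = ENNReal.ofReal (∑' k : ℤ, jbr k ^ (-p)) := by
    rw [ENNReal.ofReal_tsum_of_nonneg hnn hsum]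
    exact tsum_congr fun k => (Jb_rpow k (-p)).symm
  rw [this]
  exact ENNReal.ofReal_ne_top

/-- Weighted `ℓ¹` bound by the `ℓ²ₛ` norm, via Cauchy–Schwarz. -/
lemma l1w (t sv : ℝ) (h : ℤ → ℝ≥0∞) :
    ∑' a, Jb a ^ t * h a
      ≤ (∑' a : ℤ, Jb a ^ (2*t - 2*sv)) ^ ((1:ℝ)/2)
        * (∑' a, (Jb a ^ sv * h a) ^ 2) ^ ((1:ℝ)/2) := by
  have h1 : ∀ a : ℤ, Jb a ^ t * h a = Jb a ^ (t - sv) * (Jb a ^ sv * h a) := by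
    intro a
    rw [← mul_assoc, ← Jb_rpow_add]
    ring_nf
  calc ∑' a, Jb a ^ t * h a = ∑' a, Jb a ^ (t - sv) * (Jb a ^ sv * h a) := tsum_congr h1
    _ ≤ (∑' a : ℤ, (Jb a ^ (t - sv)) ^ 2) ^ ((1:ℝ)/2)
        * (∑' a, (Jb a ^ sv * h a) ^ 2) ^ ((1:ℝ)/2) := tsum_cs _ _
    _ = (∑' a : ℤ, Jb a ^ (2*t - 2*sv)) ^ ((1:ℝ)/2)
        * (∑' a, (Jb a ^ sv * h a) ^ 2) ^ ((1:ℝ)/2) := by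
        congr 2
        apply tsum_congr; intro a
        rw [← ENNReal.rpow_natCast (Jb a ^ (t - sv)) 2, ← ENNReal.rpow_mul]
        congr 1
        push_cast; ring

end Lam

section ClaimA

/-- `⟨∑ v i⟩ ≤ 1 + ∑ ⟨v i⟩`. -/
lemma Jb_sum_le {ι : Type*} (s : Finset ι) (v : ι → ℤ) :
    Jb (∑ i ∈ s, v i) ≤ 1 + ∑ i ∈ s, Jb (v i) := by
  induction s using Finset.cons_induction with
  | empty => simp [Jb_zero]
  | cons a s ha ih =>
    rw [Finset.sum_cons, Finset.sum_cons]
    calc Jb (v a + ∑ i ∈ s, v i) ≤ Jb (v a) + Jb (∑ i ∈ s, v i) := Jb_add_le _ _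
      _ ≤ Jb (v a) + (1 + ∑ i ∈ s, Jb (v i)) := by gcongr
      _ = 1 + (Jb (v a) + ∑ i ∈ s, Jb (v i)) := by ring

/-- Claim A : `⟨∑ v i⟩^t ≤ (card+1)^t (1 + ∑ ⟨v i⟩^t)`. -/
lemma Jb_sum_rpow_le {ι : Type*} (s : Finset ι) (v : ι → ℤ) {t : ℝ} (ht : 0 ≤ t) :
    Jb (∑ i ∈ s, v i) ^ t ≤ ((s.card + 1 : ℕ) : ℝ≥0∞) ^ t * (1 + ∑ i ∈ s, Jb (v i) ^ t) := by
  rcases eq_or_lt_of_le ht with rfl | ht'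
  · simp only [ENNReal.rpow_zero, one_mul]
    exact le_add_right le_rfl
  set M := 1 ⊔ s.sup (fun i => Jb (v i)) with hM
  have hMble : Jb (∑ i ∈ s, v i) ≤ ((s.card + 1 : ℕ) : ℝ≥0∞) * M := by
    calc Jb (∑ i ∈ s, v i) ≤ 1 + ∑ i ∈ s, Jb (v i) := Jb_sum_le s v
      _ ≤ M + ∑ i ∈ s, M := by
        gcongr with i hi
        · exact le_sup_left
        · exact le_sup_of_le_right (Finset.le_sup (f := fun i => Jb (v i)) hi)
      _ = ((s.card + 1 : ℕ) : ℝ≥0∞) * M := by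
        rw [Finset.sum_const, nsmul_eq_mul]
        push_cast
        ring
  calc Jb (∑ i ∈ s, v i) ^ t ≤ (((s.card + 1 : ℕ) : ℝ≥0∞) * M) ^ t :=
        ENNReal.rpow_le_rpow hMble ht
    _ = ((s.card + 1 : ℕ) : ℝ≥0∞) ^ t * M ^ t := ENNReal.mul_rpow_of_nonneg _ _ ht
    _ ≤ ((s.card + 1 : ℕ) : ℝ≥0∞) ^ t * (1 + ∑ i ∈ s, Jb (v i) ^ t) := by
        gcongr
        rcases le_total (s.sup (fun i => Jb (v i))) 1 with h | h
        · rw [hM, sup_eq_left.2 h, ENNReal.one_rpow]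
          exact le_add_right le_rfl
        · rw [hM, sup_eq_right.2 h]
          have hne : s.Nonempty := by
            by_contra hcon
            rw [Finset.not_nonempty_iff_eq_empty] at hcon
            subst hcon
            simp only [Finset.sup_empty] at h
            exact absurd (le_antisymm h (by simp)) (by simp)
          obtain ⟨i₀, hi₀, hsup⟩ := Finset.exists_mem_eq_sup s hne (fun i => Jb (v i))
          rw [hsup]
          calc Jb (v i₀) ^ t ≤ ∑ i ∈ s, Jb (v i) ^ t :=
                Finset.single_le_sum (f := fun i => Jb (v i) ^ t) (fun i _ => zero_le) hi₀
            _ ≤ 1 + ∑ i ∈ s, Jb (v i) ^ t := le_add_self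

end ClaimA

end St10



namespace St10

open Finset

lemma Jb_rpow_sq (k : ℤ) (t : ℝ) : (Jb k ^ t) ^ 2 = Jb k ^ (2*t) := by
  rw [← ENNReal.rpow_natCast (Jb k ^ t) 2, ← ENNReal.rpow_mul]
  norm_num
  rw [mul_comm]

lemma l2_smul (c : ℝ≥0∞) (F : ℤ → ℝ≥0∞) :
    (∑' k, (c * F k) ^ 2) ^ ((1:ℝ)/2) = c * (∑' k, (F k) ^ 2) ^ ((1:ℝ)/2) := by
  calc (∑' k, (c * F k) ^ 2) ^ ((1:ℝ)/2) = (c^2 * ∑' k, (F k) ^ 2) ^ ((1:ℝ)/2) := by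
        rw [← ENNReal.tsum_mul_left]
        congr 1
        exact tsum_congr fun k => mul_pow _ _ 2
    _ = c * (∑' k, (F k) ^ 2) ^ ((1:ℝ)/2) := by
        rw [ENNReal.mul_rpow_of_nonneg _ _ (by norm_num : (0:ℝ) ≤ 1/2), ennreal_sq_sqrt]

lemma l2_two (F G : ℤ → ℝ≥0∞) :
    (∑' k, (F k + G k) ^ 2) ^ ((1:ℝ)/2)
      ≤ (∑' k, (F k) ^ 2) ^ ((1:ℝ)/2) + (∑' k, (G k) ^ 2) ^ ((1:ℝ)/2) := by
  calc (∑' k, (F k + G k) ^ 2) ^ ((1:ℝ)/2)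
      = (∑' k, (∑ b : Bool, if b then F k else G k) ^ 2) ^ ((1:ℝ)/2) := by
        congr 1
        apply tsum_congr; intro k
        rw [Fintype.sum_bool]
        simp
    _ ≤ ∑ b : Bool, (∑' k, (if b then F k else G k) ^ 2) ^ ((1:ℝ)/2) :=
        l2_finset (univ : Finset Bool) (fun b k => if b then F k else G k)
    _ = (∑' k, (F k) ^ 2) ^ ((1:ℝ)/2) + (∑' k, (G k) ^ 2) ^ ((1:ℝ)/2) := by
        rw [Fintype.sum_bool]
        simp

/-- Young-type bound with uniform `ℓ¹` control. -/
lemma youngN_bound {ι : Type*} [Fintype ι] [DecidableEq ι] (u : ι → ℤ → ℝ≥0∞) (j : ι)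
    (G : ι → ℝ≥0∞) (κ : ℝ≥0∞)
    (h2 : (∑' a, (u j a) ^ 2) ^ ((1:ℝ)/2) ≤ G j)
    (h1 : ∀ i, i ≠ j → ∑' a, u i a ≤ κ * G i) :
    (∑' k : ℤ, (∑' v : {v : ι → ℤ // ∑ i, v i = k}, ∏ i, u i (v.1 i)) ^ 2) ^ ((1:ℝ)/2)
      ≤ (1 + κ) ^ (Fintype.card ι) * ∏ i, G i := by
  calc (∑' k : ℤ, (∑' v : {v : ι → ℤ // ∑ i, v i = k}, ∏ i, u i (v.1 i)) ^ 2) ^ ((1:ℝ)/2)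
      ≤ (∑' a, (u j a) ^ 2) ^ ((1:ℝ)/2) * ∏ i' : {i : ι // i ≠ j}, ∑' a, u i'.1 a :=
        youngN u j
    _ ≤ G j * ∏ i' : {i : ι // i ≠ j}, (κ * G i'.1) := by
        apply mul_le_mul' h2
        exact Finset.prod_le_prod' fun i' _ => h1 i'.1 i'.2
    _ = G j * (κ ^ (Fintype.card {i : ι // i ≠ j}) * ∏ i' : {i : ι // i ≠ j}, G i'.1) := by
        rw [Finset.prod_mul_distrib, Finset.prod_const, Finset.card_univ]
    _ ≤ G j * ((1 + κ) ^ (Fintype.card ι) * ∏ i' : {i : ι // i ≠ j}, G i'.1) := by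
        apply mul_le_mul_right
        apply mul_le_mul_left
        calc κ ^ (Fintype.card {i : ι // i ≠ j}) ≤ (1+κ) ^ (Fintype.card {i : ι // i ≠ j}) := by
              gcongr
              exact le_add_self
          _ ≤ (1+κ) ^ (Fintype.card ι) := by
              apply pow_le_pow_right' (le_add_right le_rfl) (Fintype.card_subtype_le _)
    _ = (1 + κ) ^ (Fintype.card ι) * ∏ i, G i := by
        rw [prod_split_subtype j G]
        ring

/-- Sup-type bound with uniform `ℓ¹` control. -/
lemma supN_bound {ι : Type*} [Fintype ι] [DecidableEq ι] (u : ι → ℤ → ℝ≥0∞) {j l : ι}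
    (hlj : l ≠ j) (G : ι → ℝ≥0∞) (κ : ℝ≥0∞)
    (h2j : (∑' a, (u j a) ^ 2) ^ ((1:ℝ)/2) ≤ G j)
    (h2l : (∑' a, (u l a) ^ 2) ^ ((1:ℝ)/2) ≤ G l)
    (h1 : ∀ i, i ≠ j → i ≠ l → ∑' a, u i a ≤ κ * G i) (k : ℤ) :
    (∑' v : {v : ι → ℤ // ∑ i, v i = k}, ∏ i, u i (v.1 i))
      ≤ (1 + κ) ^ (Fintype.card ι) * ∏ i, G i := by
  apply (supN u hlj k).trans
  calc ((∑' a, (u j a) ^ 2) ^ ((1:ℝ)/2)) * ((∑' a, (u l a) ^ 2) ^ ((1:ℝ)/2)) *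
        ∏ i'' : {i' : {i : ι // i ≠ j} // i' ≠ ⟨l, hlj⟩}, ∑' a, u i''.1.1 a
      ≤ G j * G l * ∏ i'' : {i' : {i : ι // i ≠ j} // i' ≠ ⟨l, hlj⟩}, (κ * G i''.1.1) := by
        apply mul_le_mul' (mul_le_mul' h2j h2l)
        apply Finset.prod_le_prod'
        intro i'' _
        apply h1 i''.1.1 i''.1.2
        intro hcon
        exact i''.2 (Subtype.ext hcon)
    _ = G j * G l * (κ ^ (Fintype.card {i' : {i : ι // i ≠ j} // i' ≠ ⟨l, hlj⟩})
          * ∏ i'' : {i' : {i : ι // i ≠ j} // i' ≠ ⟨l, hlj⟩}, G i''.1.1) := by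
        rw [Finset.prod_mul_distrib, Finset.prod_const, Finset.card_univ]
    _ ≤ G j * G l * ((1 + κ) ^ (Fintype.card ι)
          * ∏ i'' : {i' : {i : ι // i ≠ j} // i' ≠ ⟨l, hlj⟩}, G i''.1.1) := by
        apply mul_le_mul_right
        apply mul_le_mul_left
        calc κ ^ (Fintype.card {i' : {i : ι // i ≠ j} // i' ≠ ⟨l, hlj⟩})
            ≤ (1+κ) ^ (Fintype.card {i' : {i : ι // i ≠ j} // i' ≠ ⟨l, hlj⟩}) := by
              gcongr
              exact le_add_self
          _ ≤ (1+κ) ^ (Fintype.card ι) := by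
              apply pow_le_pow_right' (le_add_right le_rfl)
              calc Fintype.card {i' : {i : ι // i ≠ j} // i' ≠ ⟨l, hlj⟩}
                  ≤ Fintype.card {i : ι // i ≠ j} := Fintype.card_subtype_le _
                _ ≤ Fintype.card ι := Fintype.card_subtype_le _
    _ = (1 + κ) ^ (Fintype.card ι) * ∏ i, G i := by
        rw [prod_split_subtype j G,
          prod_split_subtype (⟨l, hlj⟩ : {i : ι // i ≠ j}) (fun i' => G i'.1)]
        ring

/-- Pointwise weight inequality, endpoint range `3/2 ≤ s ≤ 3`. -/
lemma PW1 {N : ℕ} (hN : 1 ≤ N) {s : ℝ} (hs : 3/2 ≤ s) (hs3 : s ≤ 3)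
    (j : Fin N) (v : Fin N → ℤ) (k : ℤ) (hv : ∑ i, v i = k) :
    Jb k ^ (s - 3) * Jb (v j) ^ (3:ℝ)
      ≤ (2:ℝ≥0∞)^((3:ℝ)/2) * (1 + (N:ℝ≥0∞)^((3:ℝ)/2)) * Jb (v j) ^ s
        + (2:ℝ≥0∞)^((3:ℝ)/2) * (N:ℝ≥0∞)^((3:ℝ)/2)
          * (Jb k ^ (s - 3) * (Jb (v j) ^ s * ∑ l ∈ univ.erase j, Jb (v l) ^ s)) := by
  set c2 : ℝ≥0∞ := (2:ℝ≥0∞)^((3:ℝ)/2) with hc2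
  set cN : ℝ≥0∞ := (N:ℝ≥0∞)^((3:ℝ)/2) with hcN
  set Ss : ℝ≥0∞ := ∑ l ∈ univ.erase j, Jb (v l) ^ s with hSs
  set b : ℤ := ∑ l ∈ univ.erase j, v l with hbdef
  have hvb : v j = k - b := by
    have h0 : v j + b = k := by
      rw [hbdef, Finset.add_sum_erase univ v (mem_univ j)]
      exact hv
    omega
  have ht0 : (0:ℝ) ≤ 3 - s := by linarith
  have e2 : Jb (v j) ^ (3 - s) ≤ c2 * (Jb k ^ (3-s) + Jb b ^ (3-s)) := by
    calc Jb (v j) ^ (3-s) ≤ (2 * (Jb k ⊔ Jb b)) ^ (3-s) := by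
          apply ENNReal.rpow_le_rpow _ ht0
          rw [hvb]; exact Jb_sub_le k b
      _ = (2:ℝ≥0∞)^(3-s) * (Jb k ⊔ Jb b)^(3-s) := ENNReal.mul_rpow_of_nonneg _ _ ht0
      _ ≤ c2 * (Jb k ^ (3-s) + Jb b ^ (3-s)) := by
          apply mul_le_mul'
          · exact ENNReal.rpow_le_rpow_of_exponent_le one_le_two (by linarith)
          · exact sup_rpow_le
  have e3 : Jb b ^ (3-s) ≤ cN * (1 + ∑ l ∈ univ.erase j, Jb (v l) ^ (3-s)) := by
    have h0 := Jb_sum_rpow_le (univ.erase j) v ht0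
    rw [← hbdef] at h0
    apply h0.trans
    apply mul_le_mul' _ le_rfl
    have hcard : (univ.erase j).card + 1 = N := by
      rw [Finset.card_erase_of_mem (mem_univ j), Finset.card_univ, Fintype.card_fin]
      omega
    rw [hcard]
    exact ENNReal.rpow_le_rpow_of_exponent_le (by exact_mod_cast hN) (by linarith)
  have e4 : ∑ l ∈ univ.erase j, Jb (v l) ^ (3-s) ≤ Ss :=
    Finset.sum_le_sum fun l _ => Jb_exp_mono _ (by linarith)
  have key : Jb (v j) ^ (3-s) ≤ c2 * Jb k ^ (3-s) + (c2*cN + c2*cN * Ss) := by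
    apply e2.trans
    calc c2 * (Jb k ^ (3-s) + Jb b ^ (3-s))
        ≤ c2 * (Jb k ^ (3-s) + cN * (1 + Ss)) := by
          gcongr
          exact e3.trans (by gcongr)
      _ = c2 * Jb k ^ (3-s) + (c2*cN + c2*cN * Ss) := by ring
  have hone : Jb k ^ (s-3) * Jb k ^ (3-s) = 1 := by
    rw [← Jb_rpow_add, show s - 3 + (3 - s) = 0 by ring, ENNReal.rpow_zero]
  calc Jb k ^ (s-3) * Jb (v j) ^ (3:ℝ)
      = (Jb k ^ (s-3) * Jb (v j) ^ (3-s)) * Jb (v j) ^ s := by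
        rw [show Jb (v j) ^ (3:ℝ) = Jb (v j) ^ (3-s) * Jb (v j) ^ s by
          rw [← Jb_rpow_add]; congr 1; ring]
        ring
    _ ≤ (Jb k ^ (s-3) * (c2 * Jb k ^ (3-s) + (c2*cN + c2*cN * Ss))) * Jb (v j) ^ s := by
        gcongr
    _ = c2 * (Jb k ^ (s-3) * Jb k ^ (3-s)) * Jb (v j) ^ s
        + c2*cN*(Jb k ^ (s-3)) * Jb (v j) ^ s
        + c2*cN*(Jb k ^ (s-3) * (Jb (v j) ^ s * Ss)) := by ring
    _ ≤ c2 * 1 * Jb (v j) ^ s + c2*cN*1 * Jb (v j) ^ s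
        + c2*cN*(Jb k ^ (s-3) * (Jb (v j) ^ s * Ss)) := by
        gcongr
        · exact le_of_eq hone
        · exact Jb_rpow_le_one k (by linarith)
    _ = c2 * (1 + cN) * Jb (v j) ^ s + c2*cN*(Jb k ^ (s-3) * (Jb (v j) ^ s * Ss)) := by ring

/-- Pointwise weight inequality, range `s ≥ 5/2`. -/
lemma PW2 {N : ℕ} (hN : 1 ≤ N) {s : ℝ} (hs : (5:ℝ)/2 ≤ s)
    (j : Fin N) (v : Fin N → ℤ) (k : ℤ) (hv : ∑ i, v i = k) :
    Jb k ^ (s - 3) * Jb (v j) ^ (3:ℝ)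
      ≤ ((2:ℝ≥0∞)^((3:ℝ)/2) * (1 + (N:ℝ≥0∞)^((3:ℝ)/2)) + 2 * ((N+1 : ℕ):ℝ≥0∞)^(s-3))
        * (Jb (v j) ^ s * (1 + ∑ l ∈ univ.erase j, Jb (v l) ^ |s - 3|)) := by
  set c2 : ℝ≥0∞ := (2:ℝ≥0∞)^((3:ℝ)/2) with hc2
  set cN : ℝ≥0∞ := (N:ℝ≥0∞)^((3:ℝ)/2) with hcN
  set cB : ℝ≥0∞ := ((N+1 : ℕ):ℝ≥0∞)^(s-3) with hcB
  set Sg : ℝ≥0∞ := ∑ l ∈ univ.erase j, Jb (v l) ^ |s - 3| with hSg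
  have hbig : 1 ≤ Jb (v j) ^ s * (1 + Sg) := by
    have h1 : (1:ℝ≥0∞) ≤ Jb (v j) ^ s := one_le_Jb_rpow _ (by linarith)
    calc (1:ℝ≥0∞) = 1 * 1 := (one_mul 1).symm
      _ ≤ Jb (v j) ^ s * (1 + Sg) := mul_le_mul' h1 (le_add_right le_rfl)
  rcases le_total s 3 with hs3 | hs3
  · -- 5/2 ≤ s ≤ 3
    have habs : |s - 3| = 3 - s := by rw [abs_of_nonpos (by linarith)]; ring
    set b : ℤ := ∑ l ∈ univ.erase j, v l with hbdef
    have hvb : v j = k - b := by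
      have h0 : v j + b = k := by
        rw [hbdef, Finset.add_sum_erase univ v (mem_univ j)]
        exact hv
      omega
    have ht0 : (0:ℝ) ≤ 3 - s := by linarith
    have e2 : Jb (v j) ^ (3 - s) ≤ c2 * (Jb k ^ (3-s) + Jb b ^ (3-s)) := by
      calc Jb (v j) ^ (3-s) ≤ (2 * (Jb k ⊔ Jb b)) ^ (3-s) := by
            apply ENNReal.rpow_le_rpow _ ht0
            rw [hvb]; exact Jb_sub_le k b
        _ = (2:ℝ≥0∞)^(3-s) * (Jb k ⊔ Jb b)^(3-s) := ENNReal.mul_rpow_of_nonneg _ _ ht0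
        _ ≤ c2 * (Jb k ^ (3-s) + Jb b ^ (3-s)) := by
            apply mul_le_mul'
            · exact ENNReal.rpow_le_rpow_of_exponent_le one_le_two (by linarith)
            · exact sup_rpow_le
    have e3 : Jb b ^ (3-s) ≤ cN * (1 + Sg) := by
      have h0 := Jb_sum_rpow_le (univ.erase j) v ht0
      rw [← hbdef] at h0
      apply h0.trans
      have hcard : (univ.erase j).card + 1 = N := by
        rw [Finset.card_erase_of_mem (mem_univ j), Finset.card_univ, Fintype.card_fin]
        omega
      rw [hcard]
      apply mul_le_mul'
      · exact ENNReal.rpow_le_rpow_of_exponent_le (by exact_mod_cast hN) (by linarith)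
      · rw [hSg, habs]
    have hone : Jb k ^ (s-3) * Jb k ^ (3-s) = 1 := by
      rw [← Jb_rpow_add, show s - 3 + (3 - s) = 0 by ring, ENNReal.rpow_zero]
    calc Jb k ^ (s-3) * Jb (v j) ^ (3:ℝ)
        = (Jb k ^ (s-3) * Jb (v j) ^ (3-s)) * Jb (v j) ^ s := by
          rw [show Jb (v j) ^ (3:ℝ) = Jb (v j) ^ (3-s) * Jb (v j) ^ s by
            rw [← Jb_rpow_add]; congr 1; ring]
          ring
      _ ≤ (Jb k ^ (s-3) * (c2 * (Jb k ^ (3-s) + cN * (1 + Sg)))) * Jb (v j) ^ s := by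
          gcongr
          exact e2.trans (by gcongr)
      _ = c2 * (Jb k ^ (s-3) * Jb k ^ (3-s)) * Jb (v j) ^ s
          + c2 * cN * (Jb k ^ (s-3)) * ((1 + Sg) * Jb (v j) ^ s) := by ring
      _ ≤ c2 * 1 * Jb (v j) ^ s + c2 * cN * 1 * ((1 + Sg) * Jb (v j) ^ s) := by
          gcongr
          · exact le_of_eq hone
          · exact Jb_rpow_le_one k (by linarith)
      _ = c2 * Jb (v j) ^ s + c2 * cN * (Jb (v j) ^ s * (1 + Sg)) := by ring
      _ ≤ c2 * (Jb (v j) ^ s * (1 + Sg)) + c2 * cN * (Jb (v j) ^ s * (1 + Sg)) := by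
          apply add_le_add_left
          apply mul_le_mul_right
          calc Jb (v j) ^ s = Jb (v j) ^ s * 1 := (mul_one _).symm
            _ ≤ Jb (v j) ^ s * (1 + Sg) := mul_le_mul_right (le_add_right le_rfl) _
      _ = (c2 * (1 + cN)) * (Jb (v j) ^ s * (1 + Sg)) := by ring
      _ ≤ (c2 * (1 + cN) + 2 * cB) * (Jb (v j) ^ s * (1 + Sg)) :=
          mul_le_mul_left (le_add_right le_rfl) _
  · -- 3 ≤ s
    have habs : |s - 3| = s - 3 := abs_of_nonneg (by linarith)
    have ht0 : (0:ℝ) ≤ s - 3 := by linarith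
    have hSg' : Sg = ∑ l ∈ univ.erase j, Jb (v l) ^ (s-3) := by rw [hSg, habs]
    have e1 : Jb k ^ (s-3) ≤ cB * (1 + ∑ l, Jb (v l) ^ (s-3)) := by
      have h0 := Jb_sum_rpow_le (univ : Finset (Fin N)) v ht0
      rw [hv] at h0
      apply h0.trans
      rw [Finset.card_univ, Fintype.card_fin]
    have e5 : ∑ l, Jb (v l) ^ (s-3) = Jb (v j) ^ (s-3) + ∑ l ∈ univ.erase j, Jb (v l) ^ (s-3) :=
      (Finset.add_sum_erase univ (fun l => Jb (v l) ^ (s-3)) (mem_univ j)).symm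
    have e6 : Jb (v j) ^ (3:ℝ) * Jb (v j) ^ (s-3) = Jb (v j) ^ s := by
      rw [← Jb_rpow_add]; congr 1; ring
    have e7 : Jb (v j) ^ (3:ℝ) ≤ Jb (v j) ^ s := Jb_exp_mono _ (by linarith)
    calc Jb k ^ (s-3) * Jb (v j) ^ (3:ℝ)
        ≤ (cB * (1 + (Jb (v j) ^ (s-3) + ∑ l ∈ univ.erase j, Jb (v l) ^ (s-3))))
            * Jb (v j) ^ (3:ℝ) := by
          apply mul_le_mul_left
          rw [← e5]
          exact e1
      _ = cB * Jb (v j) ^ (3:ℝ) + cB * (Jb (v j) ^ (3:ℝ) * Jb (v j) ^ (s-3))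
          + cB * ((∑ l ∈ univ.erase j, Jb (v l) ^ (s-3)) * Jb (v j) ^ (3:ℝ)) := by ring
      _ ≤ cB * Jb (v j) ^ s + cB * Jb (v j) ^ s
          + cB * (Sg * Jb (v j) ^ s) := by
          apply add_le_add (add_le_add ?_ ?_) ?_
          · exact mul_le_mul_right e7 _
          · exact le_of_eq (by rw [e6])
          · rw [hSg']
            exact mul_le_mul_right (mul_le_mul_right e7 _) _
      _ ≤ (2 * cB) * (Jb (v j) ^ s * (1 + Sg)) := by
          have h1 : cB * (Sg * Jb (v j) ^ s) ≤ (2*cB) * (Sg * Jb (v j) ^ s) := by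
            apply mul_le_mul_left
            calc cB = 1 * cB := (one_mul _).symm
              _ ≤ 2 * cB := mul_le_mul_left one_le_two _
          calc cB * Jb (v j) ^ s + cB * Jb (v j) ^ s + cB * (Sg * Jb (v j) ^ s)
              = 2 * cB * Jb (v j) ^ s + cB * (Sg * Jb (v j) ^ s) := by ring
            _ ≤ 2 * cB * Jb (v j) ^ s + (2*cB) * (Sg * Jb (v j) ^ s) := add_le_add_right h1 _
            _ = (2 * cB) * (Jb (v j) ^ s * (1 + Sg)) := by ring
      _ ≤ (c2 * (1 + cN) + 2 * cB) * (Jb (v j) ^ s * (1 + Sg)) :=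
          mul_le_mul_left (le_add_left le_rfl) _

end St10



namespace St10

open Finset

lemma l2_mono (F G : ℤ → ℝ≥0∞) (hfg : ∀ k, F k ≤ G k) :
    (∑' k, (F k) ^ 2) ^ ((1:ℝ)/2) ≤ (∑' k, (G k) ^ 2) ^ ((1:ℝ)/2) :=
  ENNReal.rpow_le_rpow (ENNReal.tsum_le_tsum fun k => pow_le_pow_left' (hfg k) 2) (by norm_num)

/-- The weighted family used in the multilinear estimates. -/
noncomputable def UU {N : ℕ} (h : Fin N → ℤ → ℝ≥0∞) (s : ℝ) (j l' : Fin N) (e : ℝ) :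
    Fin N → ℤ → ℝ≥0∞ :=
  fun l a => Jb a ^ (if l = j then s else if l = l' then e else 0) * h l a

lemma UU_j {N : ℕ} (h : Fin N → ℤ → ℝ≥0∞) (s : ℝ) (j l' : Fin N) (e : ℝ) (a : ℤ) :
    UU h s j l' e j a = Jb a ^ s * h j a := by simp [UU]

lemma UU_l' {N : ℕ} (h : Fin N → ℤ → ℝ≥0∞) (s : ℝ) {j l' : Fin N} (hne : l' ≠ j) (e : ℝ) (a : ℤ) :
    UU h s j l' e l' a = Jb a ^ e * h l' a := by simp [UU, hne]

lemma UU_other {N : ℕ} (h : Fin N → ℤ → ℝ≥0∞) (s : ℝ) {j l' i : Fin N} (hij : i ≠ j)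
    (hil : i ≠ l') (e : ℝ) (a : ℤ) :
    UU h s j l' e i a = Jb a ^ (0:ℝ) * h i a := by simp [UU, hij, hil]

lemma UU_prod {N : ℕ} (h : Fin N → ℤ → ℝ≥0∞) (s : ℝ) {j l' : Fin N} (hne : l' ≠ j) (e : ℝ)
    (v : Fin N → ℤ) :
    ∏ l, UU h s j l' e l (v l) = Jb (v j) ^ s * Jb (v l') ^ e * ∏ l, h l (v l) := by
  unfold UU
  rw [Finset.prod_mul_distrib]
  congr 1
  have hl'mem : l' ∈ univ.erase j := Finset.mem_erase.2 ⟨hne, mem_univ _⟩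
  rw [← Finset.mul_prod_erase univ
    (fun l => Jb (v l) ^ (if l = j then s else if l = l' then e else 0)) (mem_univ j),
    ← Finset.mul_prod_erase ((univ : Finset (Fin N)).erase j)
    (fun l => Jb (v l) ^ (if l = j then s else if l = l' then e else 0)) hl'mem]
  rw [if_pos rfl, if_neg hne, if_pos rfl]
  rw [Finset.prod_eq_one, mul_one]
  intro x hx
  simp only [Finset.mem_erase] at hx
  rw [if_neg hx.2.1, if_neg hx.1, ENNReal.rpow_zero]

lemma UU_prod_diag {N : ℕ} (h : Fin N → ℤ → ℝ≥0∞) (s : ℝ) (j : Fin N) (e : ℝ)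
    (v : Fin N → ℤ) :
    ∏ l, UU h s j j e l (v l) = Jb (v j) ^ s * ∏ l, h l (v l) := by
  unfold UU
  rw [Finset.prod_mul_distrib]
  congr 1
  rw [← Finset.mul_prod_erase univ
    (fun l => Jb (v l) ^ (if l = j then s else if l = j then e else 0)) (mem_univ j)]
  rw [if_pos rfl]
  rw [Finset.prod_eq_one, mul_one]
  intro x hx
  simp only [Finset.mem_erase] at hx
  rw [if_neg hx.1, if_neg hx.1, ENNReal.rpow_zero]

/-- Main per-direction estimate. -/
lemma stepJ {N : ℕ} (hN : 1 ≤ N) {s : ℝ} (hs : 3/2 ≤ s) :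
    ∃ D : ℝ≥0∞, D ≠ ⊤ ∧ ∀ (h : Fin N → ℤ → ℝ≥0∞) (j : Fin N),
      (∑' k : ℤ, (Jb k ^ (s-3) *
          ∑' v : {v : Fin N → ℤ // ∑ i, v i = k},
            Jb (v.1 j) ^ (3:ℝ) * ∏ l, h l (v.1 l)) ^ 2) ^ ((1:ℝ)/2)
        ≤ D * ∏ l, (∑' a, (Jb a ^ s * h l a) ^ 2) ^ ((1:ℝ)/2) := by
  classical
  set κ0 : ℝ≥0∞ := (∑' a : ℤ, Jb a ^ (2*(0:ℝ) - 2*s)) ^ ((1:ℝ)/2) with hκ0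
  have hκ0top : κ0 ≠ ⊤ := by
    rw [hκ0]
    apply ENNReal.rpow_ne_top_of_nonneg (by norm_num)
    have he : ∀ a : ℤ, Jb a ^ (2*(0:ℝ) - 2*s) = Jb a ^ (-(2*s)) := fun a => by
      rw [show 2*(0:ℝ) - 2*s = -(2*s) by ring]
    rw [tsum_congr he]
    exact lam_ne_top (by linarith)
  by_cases hs5 : s < 5/2
  · -- Branch I : 3/2 ≤ s < 5/2
    have hs3 : s ≤ 3 := by linarith
    set C1 : ℝ≥0∞ := (2:ℝ≥0∞)^((3:ℝ)/2) * (1 + (N:ℝ≥0∞)^((3:ℝ)/2)) with hC1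
    set C2 : ℝ≥0∞ := (2:ℝ≥0∞)^((3:ℝ)/2) * (N:ℝ≥0∞)^((3:ℝ)/2) with hC2
    set Λ2 : ℝ≥0∞ := ∑' k : ℤ, Jb k ^ (2*(s-3)) with hΛ2
    have hΛ2top : Λ2 ≠ ⊤ := by
      rw [hΛ2]
      have he : ∀ k : ℤ, Jb k ^ (2*(s-3)) = Jb k ^ (-(6 - 2*s)) := fun k => by
        rw [show 2*(s-3) = -(6 - 2*s) by ring]
      rw [tsum_congr he]
      exact lam_ne_top (by linarith)
    have h2top : (2:ℝ≥0∞)^((3:ℝ)/2) ≠ ⊤ :=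
      ENNReal.rpow_ne_top_of_nonneg (by norm_num) (by norm_num)
    have hNtop : (N:ℝ≥0∞)^((3:ℝ)/2) ≠ ⊤ :=
      ENNReal.rpow_ne_top_of_nonneg (by norm_num) (ENNReal.natCast_ne_top N)
    have hκpow : (1+κ0)^N ≠ ⊤ :=
      ENNReal.pow_ne_top (ENNReal.add_ne_top.2 ⟨ENNReal.one_ne_top, hκ0top⟩)
    have hΛh : Λ2 ^ ((1:ℝ)/2) ≠ ⊤ := ENNReal.rpow_ne_top_of_nonneg (by norm_num) hΛ2top
    refine ⟨C1 * (1+κ0)^N + C2 * ((N:ℝ≥0∞) * (Λ2 ^ ((1:ℝ)/2) * ((1+κ0)^N))), ?_, ?_⟩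
    · apply ENNReal.add_ne_top.2
      constructor
      · exact ENNReal.mul_ne_top (ENNReal.mul_ne_top h2top
          (ENNReal.add_ne_top.2 ⟨ENNReal.one_ne_top, hNtop⟩)) hκpow
      · exact ENNReal.mul_ne_top (ENNReal.mul_ne_top h2top hNtop)
          (ENNReal.mul_ne_top (ENNReal.natCast_ne_top N) (ENNReal.mul_ne_top hΛh hκpow))
    intro h j
    set G : Fin N → ℝ≥0∞ := fun l => (∑' a, (Jb a ^ s * h l a) ^ 2) ^ ((1:ℝ)/2) with hG
    have hl1 : ∀ l : Fin N, ∑' a, Jb a ^ (0:ℝ) * h l a ≤ κ0 * G l := fun l => l1w 0 s (h l)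
    have hP0 : (∑' k : ℤ, (∑' v : {v : Fin N → ℤ // ∑ i, v i = k},
        ∏ l, UU h s j j 0 l (v.1 l)) ^ 2) ^ ((1:ℝ)/2) ≤ (1+κ0)^N * ∏ l, G l := by
      have hy := youngN_bound (UU h s j j 0) j G κ0 ?_ ?_
      · rwa [Fintype.card_fin] at hy
      · apply le_of_eq
        rw [hG]
        congr 1
        exact tsum_congr fun a => by rw [UU_j]
      · intro i hij
        calc ∑' a, UU h s j j 0 i a = ∑' a, Jb a ^ (0:ℝ) * h i a :=
              tsum_congr fun a => by rw [UU_other h s hij hij]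
          _ ≤ κ0 * G i := hl1 i
    have hPl : ∀ (l' : Fin N), l' ≠ j → ∀ k : ℤ,
        (∑' v : {v : Fin N → ℤ // ∑ i, v i = k}, ∏ l, UU h s j l' s l (v.1 l))
          ≤ (1+κ0)^N * ∏ l, G l := by
      intro l' hne k
      have hsup := supN_bound (UU h s j l' s) hne G κ0 ?_ ?_ ?_ k
      · rwa [Fintype.card_fin] at hsup
      · apply le_of_eq
        rw [hG]
        congr 1
        exact tsum_congr fun a => by rw [UU_j]
      · apply le_of_eq
        rw [hG]
        congr 1
        exact tsum_congr fun a => by rw [UU_l' h s hne]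
      · intro i hij hil
        calc ∑' a, UU h s j l' s i a = ∑' a, Jb a ^ (0:ℝ) * h i a :=
              tsum_congr fun a => by rw [UU_other h s hij hil]
          _ ≤ κ0 * G i := hl1 i
    have hpt : ∀ k : ℤ,
        Jb k ^ (s-3) * ∑' v : {v : Fin N → ℤ // ∑ i, v i = k},
            Jb (v.1 j) ^ (3:ℝ) * ∏ l, h l (v.1 l)
        ≤ C1 * (∑' v : {v : Fin N → ℤ // ∑ i, v i = k}, ∏ l, UU h s j j 0 l (v.1 l))
          + C2 * ∑ l' ∈ univ.erase j,
              (Jb k ^ (s-3) * ∑' v : {v : Fin N → ℤ // ∑ i, v i = k},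
                ∏ l, UU h s j l' s l (v.1 l)) := by
      intro k
      rw [← ENNReal.tsum_mul_left]
      have hv1 : ∀ v : {v : Fin N → ℤ // ∑ i, v i = k},
          Jb k ^ (s-3) * (Jb (v.1 j) ^ (3:ℝ) * ∏ l, h l (v.1 l))
          ≤ C1 * ∏ l, UU h s j j 0 l (v.1 l)
            + C2 * ∑ l' ∈ univ.erase j, (Jb k ^ (s-3) * ∏ l, UU h s j l' s l (v.1 l)) := by
        intro v
        have hPW := PW1 hN hs hs3 j v.1 k v.2
        calc Jb k ^ (s-3) * (Jb (v.1 j) ^ (3:ℝ) * ∏ l, h l (v.1 l))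
            = (Jb k ^ (s-3) * Jb (v.1 j) ^ (3:ℝ)) * ∏ l, h l (v.1 l) := by ring
          _ ≤ ((2:ℝ≥0∞)^((3:ℝ)/2) * (1 + (N:ℝ≥0∞)^((3:ℝ)/2)) * Jb (v.1 j) ^ s
              + (2:ℝ≥0∞)^((3:ℝ)/2) * (N:ℝ≥0∞)^((3:ℝ)/2)
                * (Jb k ^ (s-3) * (Jb (v.1 j) ^ s * ∑ l' ∈ univ.erase j, Jb (v.1 l') ^ s)))
              * ∏ l, h l (v.1 l) := mul_le_mul_left hPW _
          _ = C1 * ∏ l, UU h s j j 0 l (v.1 l)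
              + C2 * ∑ l' ∈ univ.erase j,
                  (Jb k ^ (s-3) * ∏ l, UU h s j l' s l (v.1 l)) := by
              rw [add_mul]
              congr 1
              · rw [UU_prod_diag]
                ring
              · simp only [Finset.mul_sum, Finset.sum_mul]
                apply Finset.sum_congr rfl
                intro l' hl'
                rw [UU_prod h s (Finset.mem_erase.1 hl').1]
                ring
      calc ∑' v : {v : Fin N → ℤ // ∑ i, v i = k},
            Jb k ^ (s-3) * (Jb (v.1 j) ^ (3:ℝ) * ∏ l, h l (v.1 l))
          ≤ ∑' v : {v : Fin N → ℤ // ∑ i, v i = k},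
              (C1 * ∏ l, UU h s j j 0 l (v.1 l)
              + C2 * ∑ l' ∈ univ.erase j,
                  (Jb k ^ (s-3) * ∏ l, UU h s j l' s l (v.1 l))) :=
            ENNReal.tsum_le_tsum hv1
        _ = C1 * (∑' v : {v : Fin N → ℤ // ∑ i, v i = k}, ∏ l, UU h s j j 0 l (v.1 l))
            + C2 * ∑ l' ∈ univ.erase j,
                (Jb k ^ (s-3) * ∑' v : {v : Fin N → ℤ // ∑ i, v i = k},
                  ∏ l, UU h s j l' s l (v.1 l)) := by
            rw [ENNReal.tsum_add]
            congr 1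
            · exact ENNReal.tsum_mul_left
            · rw [ENNReal.tsum_mul_left]
              congr 1
              rw [Summable.tsum_finsetSum (fun l' _ => ENNReal.summable)]
              apply Finset.sum_congr rfl
              intro l' _
              exact ENNReal.tsum_mul_left
    have hZ : ∀ (l' : Fin N), l' ≠ j →
        (∑' k : ℤ, (Jb k ^ (s-3) * ∑' v : {v : Fin N → ℤ // ∑ i, v i = k},
            ∏ l, UU h s j l' s l (v.1 l)) ^ 2) ^ ((1:ℝ)/2)
          ≤ Λ2 ^ ((1:ℝ)/2) * ((1+κ0)^N * ∏ l, G l) := by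
      intro l' hne
      calc (∑' k : ℤ, (Jb k ^ (s-3) * ∑' v : {v : Fin N → ℤ // ∑ i, v i = k},
              ∏ l, UU h s j l' s l (v.1 l)) ^ 2) ^ ((1:ℝ)/2)
          ≤ (∑' k : ℤ, ((Jb k ^ (s-3)) ^ 2 * ((1+κ0)^N * ∏ l, G l) ^ 2)) ^ ((1:ℝ)/2) := by
            apply ENNReal.rpow_le_rpow _ (by norm_num)
            apply ENNReal.tsum_le_tsum
            intro k
            rw [← mul_pow]
            exact pow_le_pow_left' (mul_le_mul_right (hPl l' hne k) _) 2
        _ = (Λ2 * ((1+κ0)^N * ∏ l, G l) ^ 2) ^ ((1:ℝ)/2) := by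
            rw [ENNReal.tsum_mul_right]
            congr 2
            rw [hΛ2]
            exact tsum_congr fun k => Jb_rpow_sq k (s-3)
        _ = Λ2 ^ ((1:ℝ)/2) * ((1+κ0)^N * ∏ l, G l) := by
            rw [ENNReal.mul_rpow_of_nonneg _ _ (by norm_num : (0:ℝ) ≤ 1/2), ennreal_sq_sqrt]
    calc (∑' k : ℤ, (Jb k ^ (s-3) *
            ∑' v : {v : Fin N → ℤ // ∑ i, v i = k},
              Jb (v.1 j) ^ (3:ℝ) * ∏ l, h l (v.1 l)) ^ 2) ^ ((1:ℝ)/2)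
        ≤ (∑' k : ℤ, ((C1 * (∑' v : {v : Fin N → ℤ // ∑ i, v i = k},
              ∏ l, UU h s j j 0 l (v.1 l)))
            + (C2 * ∑ l' ∈ univ.erase j,
                (Jb k ^ (s-3) * ∑' v : {v : Fin N → ℤ // ∑ i, v i = k},
                  ∏ l, UU h s j l' s l (v.1 l)))) ^ 2) ^ ((1:ℝ)/2) :=
          l2_mono _ _ hpt
      _ ≤ (∑' k : ℤ, ((C1 * (∑' v : {v : Fin N → ℤ // ∑ i, v i = k},
              ∏ l, UU h s j j 0 l (v.1 l)))) ^ 2) ^ ((1:ℝ)/2)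
          + (∑' k : ℤ, ((C2 * ∑ l' ∈ univ.erase j,
              (Jb k ^ (s-3) * ∑' v : {v : Fin N → ℤ // ∑ i, v i = k},
                ∏ l, UU h s j l' s l (v.1 l)))) ^ 2) ^ ((1:ℝ)/2) := l2_two _ _
      _ = C1 * (∑' k : ℤ, ((∑' v : {v : Fin N → ℤ // ∑ i, v i = k},
              ∏ l, UU h s j j 0 l (v.1 l))) ^ 2) ^ ((1:ℝ)/2)
          + C2 * (∑' k : ℤ, ((∑ l' ∈ univ.erase j,
              (Jb k ^ (s-3) * ∑' v : {v : Fin N → ℤ // ∑ i, v i = k},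
                ∏ l, UU h s j l' s l (v.1 l)))) ^ 2) ^ ((1:ℝ)/2) := by
          rw [l2_smul, l2_smul]
      _ ≤ C1 * ((1+κ0)^N * ∏ l, G l)
          + C2 * ((N:ℝ≥0∞) * (Λ2 ^ ((1:ℝ)/2) * ((1+κ0)^N * ∏ l, G l))) := by
          apply add_le_add
          · exact mul_le_mul_right hP0 _
          · apply mul_le_mul_right
            calc (∑' k : ℤ, ((∑ l' ∈ univ.erase j,
                  (Jb k ^ (s-3) * ∑' v : {v : Fin N → ℤ // ∑ i, v i = k},
                    ∏ l, UU h s j l' s l (v.1 l)))) ^ 2) ^ ((1:ℝ)/2)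
                ≤ ∑ l' ∈ univ.erase j,
                    (∑' k : ℤ, ((Jb k ^ (s-3) * ∑' v : {v : Fin N → ℤ // ∑ i, v i = k},
                      ∏ l, UU h s j l' s l (v.1 l))) ^ 2) ^ ((1:ℝ)/2) :=
                  l2_finset _ _
              _ ≤ ∑ l' ∈ univ.erase j, (Λ2 ^ ((1:ℝ)/2) * ((1+κ0)^N * ∏ l, G l)) :=
                  Finset.sum_le_sum fun l' hl' => hZ l' (Finset.mem_erase.1 hl').1
              _ ≤ (N:ℝ≥0∞) * (Λ2 ^ ((1:ℝ)/2) * ((1+κ0)^N * ∏ l, G l)) := by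
                  rw [Finset.sum_const, nsmul_eq_mul]
                  apply mul_le_mul_left
                  have : (univ.erase j).card ≤ N := by
                    rw [Finset.card_erase_of_mem (mem_univ j), Finset.card_univ,
                      Fintype.card_fin]
                    omega
                  exact_mod_cast Nat.cast_le.2 this
      _ = (C1 * (1+κ0)^N + C2 * ((N:ℝ≥0∞) * (Λ2 ^ ((1:ℝ)/2) * ((1+κ0)^N)))) * ∏ l, G l := by
          ring
  · -- Branch II : s ≥ 5/2
    push_neg at hs5
    have hκσtop : (∑' a : ℤ, Jb a ^ (2*|s-3| - 2*s)) ^ ((1:ℝ)/2) ≠ ⊤ := by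
      apply ENNReal.rpow_ne_top_of_nonneg (by norm_num)
      have he : ∀ a : ℤ, Jb a ^ (2*|s-3| - 2*s) = Jb a ^ (-(2*s - 2*|s-3|)) := fun a => by
        rw [show 2*|s-3| - 2*s = -(2*s - 2*|s-3|) by ring]
      rw [tsum_congr he]
      apply lam_ne_top
      rcases abs_cases (s-3) with ⟨h1,h2⟩|⟨h1,h2⟩ <;> rw [h1] <;> linarith
    set κσ : ℝ≥0∞ := (∑' a : ℤ, Jb a ^ (2*|s-3| - 2*s)) ^ ((1:ℝ)/2) with hκσ
    set κ : ℝ≥0∞ := κ0 + κσ with hκ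
    have hκtop : κ ≠ ⊤ := ENNReal.add_ne_top.2 ⟨hκ0top, hκσtop⟩
    set CC : ℝ≥0∞ := (2:ℝ≥0∞)^((3:ℝ)/2) * (1 + (N:ℝ≥0∞)^((3:ℝ)/2))
        + 2 * ((N+1 : ℕ):ℝ≥0∞)^(s-3) with hCC
    have hCCtop : CC ≠ ⊤ := by
      apply ENNReal.add_ne_top.2
      constructor
      · exact ENNReal.mul_ne_top
          (ENNReal.rpow_ne_top_of_nonneg (by norm_num) (by norm_num))
          (ENNReal.add_ne_top.2 ⟨ENNReal.one_ne_top,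
            ENNReal.rpow_ne_top_of_nonneg (by norm_num) (ENNReal.natCast_ne_top N)⟩)
      · refine ENNReal.mul_ne_top (by norm_num) ?_
        rw [Ne, ENNReal.rpow_eq_top_iff]
        rintro (⟨h1, _⟩ | ⟨h1, _⟩)
        · rw [Nat.cast_eq_zero] at h1
          omega
        · exact ENNReal.natCast_ne_top _ h1
    have hκpow : (1+κ)^N ≠ ⊤ :=
      ENNReal.pow_ne_top (ENNReal.add_ne_top.2 ⟨ENNReal.one_ne_top, hκtop⟩)
    refine ⟨CC * (1+κ)^N + CC * ((N:ℝ≥0∞) * (1+κ)^N), ?_, ?_⟩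
    · exact ENNReal.add_ne_top.2 ⟨ENNReal.mul_ne_top hCCtop hκpow,
        ENNReal.mul_ne_top hCCtop (ENNReal.mul_ne_top (ENNReal.natCast_ne_top N) hκpow)⟩
    intro h j
    set G : Fin N → ℝ≥0∞ := fun l => (∑' a, (Jb a ^ s * h l a) ^ 2) ^ ((1:ℝ)/2) with hG
    have hl1 : ∀ l : Fin N, ∑' a, Jb a ^ (0:ℝ) * h l a ≤ κ0 * G l := fun l => l1w 0 s (h l)
    have hl1σ : ∀ l : Fin N, ∑' a, Jb a ^ |s-3| * h l a ≤ κσ * G l := fun l => l1w (|s-3|) s (h l)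
    have hκ0κ : κ0 ≤ κ := by rw [hκ]; exact le_add_right le_rfl
    have hκσκ : κσ ≤ κ := by rw [hκ]; exact le_add_left le_rfl
    have hP0 : (∑' k : ℤ, (∑' v : {v : Fin N → ℤ // ∑ i, v i = k},
        ∏ l, UU h s j j 0 l (v.1 l)) ^ 2) ^ ((1:ℝ)/2) ≤ (1+κ)^N * ∏ l, G l := by
      have hy := youngN_bound (UU h s j j 0) j G κ ?_ ?_
      · rwa [Fintype.card_fin] at hy
      · apply le_of_eq
        rw [hG]
        congr 1
        exact tsum_congr fun a => by rw [UU_j]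
      · intro i hij
        calc ∑' a, UU h s j j 0 i a = ∑' a, Jb a ^ (0:ℝ) * h i a :=
              tsum_congr fun a => by rw [UU_other h s hij hij]
          _ ≤ κ0 * G i := hl1 i
          _ ≤ κ * G i := mul_le_mul_left hκ0κ _
    have hPσ : ∀ (l' : Fin N), l' ≠ j →
        (∑' k : ℤ, (∑' v : {v : Fin N → ℤ // ∑ i, v i = k},
            ∏ l, UU h s j l' (|s-3|) l (v.1 l)) ^ 2) ^ ((1:ℝ)/2) ≤ (1+κ)^N * ∏ l, G l := by
      intro l' hne
      have hy := youngN_bound (UU h s j l' (|s-3|)) j G κ ?_ ?_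
      · rwa [Fintype.card_fin] at hy
      · apply le_of_eq
        rw [hG]
        congr 1
        exact tsum_congr fun a => by rw [UU_j]
      · intro i hij
        by_cases hil : i = l'
        · subst hil
          calc ∑' a, UU h s j i (|s-3|) i a = ∑' a, Jb a ^ |s-3| * h i a :=
                tsum_congr fun a => by rw [UU_l' h s hne]
            _ ≤ κσ * G i := hl1σ i
            _ ≤ κ * G i := mul_le_mul_left hκσκ _
        · calc ∑' a, UU h s j l' (|s-3|) i a = ∑' a, Jb a ^ (0:ℝ) * h i a :=
                tsum_congr fun a => by rw [UU_other h s hij hil]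
            _ ≤ κ0 * G i := hl1 i
            _ ≤ κ * G i := mul_le_mul_left hκ0κ _
    have hpt : ∀ k : ℤ,
        Jb k ^ (s-3) * ∑' v : {v : Fin N → ℤ // ∑ i, v i = k},
            Jb (v.1 j) ^ (3:ℝ) * ∏ l, h l (v.1 l)
        ≤ CC * (∑' v : {v : Fin N → ℤ // ∑ i, v i = k}, ∏ l, UU h s j j 0 l (v.1 l))
          + CC * ∑ l' ∈ univ.erase j,
              (∑' v : {v : Fin N → ℤ // ∑ i, v i = k},
                ∏ l, UU h s j l' (|s-3|) l (v.1 l)) := by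
      intro k
      rw [← ENNReal.tsum_mul_left]
      have hv1 : ∀ v : {v : Fin N → ℤ // ∑ i, v i = k},
          Jb k ^ (s-3) * (Jb (v.1 j) ^ (3:ℝ) * ∏ l, h l (v.1 l))
          ≤ CC * ∏ l, UU h s j j 0 l (v.1 l)
            + CC * ∑ l' ∈ univ.erase j, ∏ l, UU h s j l' (|s-3|) l (v.1 l) := by
        intro v
        have hPW := PW2 hN hs5 j v.1 k v.2
        have e1 : ∏ l, UU h s j j 0 l (v.1 l) = Jb (v.1 j) ^ s * ∏ l, h l (v.1 l) :=
          UU_prod_diag h s j 0 v.1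
        have e3 : ∑ l' ∈ univ.erase j, ∏ l, UU h s j l' (|s-3|) l (v.1 l)
            = (∑ l' ∈ univ.erase j, Jb (v.1 l') ^ |s-3|)
              * (Jb (v.1 j) ^ s * ∏ l, h l (v.1 l)) := by
          rw [Finset.sum_mul]
          apply Finset.sum_congr rfl
          intro l' hl'
          rw [UU_prod h s (Finset.mem_erase.1 hl').1]
          ring
        calc Jb k ^ (s-3) * (Jb (v.1 j) ^ (3:ℝ) * ∏ l, h l (v.1 l))
            = (Jb k ^ (s-3) * Jb (v.1 j) ^ (3:ℝ)) * ∏ l, h l (v.1 l) := by ring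
          _ ≤ (((2:ℝ≥0∞)^((3:ℝ)/2) * (1 + (N:ℝ≥0∞)^((3:ℝ)/2)) + 2 * ((N+1 : ℕ):ℝ≥0∞)^(s-3))
              * (Jb (v.1 j) ^ s * (1 + ∑ l' ∈ univ.erase j, Jb (v.1 l') ^ |s - 3|)))
              * ∏ l, h l (v.1 l) := mul_le_mul_left hPW _
          _ = CC * ∏ l, UU h s j j 0 l (v.1 l)
              + CC * ∑ l' ∈ univ.erase j, ∏ l, UU h s j l' (|s-3|) l (v.1 l) := by
              rw [e1, e3, ← hCC]
              ring
      calc ∑' v : {v : Fin N → ℤ // ∑ i, v i = k},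
            Jb k ^ (s-3) * (Jb (v.1 j) ^ (3:ℝ) * ∏ l, h l (v.1 l))
          ≤ ∑' v : {v : Fin N → ℤ // ∑ i, v i = k},
              (CC * ∏ l, UU h s j j 0 l (v.1 l)
              + CC * ∑ l' ∈ univ.erase j, ∏ l, UU h s j l' (|s-3|) l (v.1 l)) :=
            ENNReal.tsum_le_tsum hv1
        _ = CC * (∑' v : {v : Fin N → ℤ // ∑ i, v i = k}, ∏ l, UU h s j j 0 l (v.1 l))
            + CC * ∑ l' ∈ univ.erase j,
                (∑' v : {v : Fin N → ℤ // ∑ i, v i = k},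
                  ∏ l, UU h s j l' (|s-3|) l (v.1 l)) := by
            rw [ENNReal.tsum_add]
            congr 1
            · exact ENNReal.tsum_mul_left
            · rw [ENNReal.tsum_mul_left]
              congr 1
              exact Summable.tsum_finsetSum (fun l' _ => ENNReal.summable)
    calc (∑' k : ℤ, (Jb k ^ (s-3) *
            ∑' v : {v : Fin N → ℤ // ∑ i, v i = k},
              Jb (v.1 j) ^ (3:ℝ) * ∏ l, h l (v.1 l)) ^ 2) ^ ((1:ℝ)/2)
        ≤ (∑' k : ℤ, ((CC * (∑' v : {v : Fin N → ℤ // ∑ i, v i = k},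
              ∏ l, UU h s j j 0 l (v.1 l)))
            + (CC * ∑ l' ∈ univ.erase j,
                (∑' v : {v : Fin N → ℤ // ∑ i, v i = k},
                  ∏ l, UU h s j l' (|s-3|) l (v.1 l)))) ^ 2) ^ ((1:ℝ)/2) :=
          l2_mono _ _ hpt
      _ ≤ (∑' k : ℤ, ((CC * (∑' v : {v : Fin N → ℤ // ∑ i, v i = k},
              ∏ l, UU h s j j 0 l (v.1 l)))) ^ 2) ^ ((1:ℝ)/2)
          + (∑' k : ℤ, ((CC * ∑ l' ∈ univ.erase j,
              (∑' v : {v : Fin N → ℤ // ∑ i, v i = k},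
                ∏ l, UU h s j l' (|s-3|) l (v.1 l)))) ^ 2) ^ ((1:ℝ)/2) := l2_two _ _
      _ = CC * (∑' k : ℤ, ((∑' v : {v : Fin N → ℤ // ∑ i, v i = k},
              ∏ l, UU h s j j 0 l (v.1 l))) ^ 2) ^ ((1:ℝ)/2)
          + CC * (∑' k : ℤ, ((∑ l' ∈ univ.erase j,
              (∑' v : {v : Fin N → ℤ // ∑ i, v i = k},
                ∏ l, UU h s j l' (|s-3|) l (v.1 l)))) ^ 2) ^ ((1:ℝ)/2) := by
          rw [l2_smul, l2_smul]
      _ ≤ CC * ((1+κ)^N * ∏ l, G l)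
          + CC * ((N:ℝ≥0∞) * ((1+κ)^N * ∏ l, G l)) := by
          apply add_le_add
          · exact mul_le_mul_right hP0 _
          · apply mul_le_mul_right
            calc (∑' k : ℤ, ((∑ l' ∈ univ.erase j,
                  (∑' v : {v : Fin N → ℤ // ∑ i, v i = k},
                    ∏ l, UU h s j l' (|s-3|) l (v.1 l)))) ^ 2) ^ ((1:ℝ)/2)
                ≤ ∑ l' ∈ univ.erase j,
                    (∑' k : ℤ, ((∑' v : {v : Fin N → ℤ // ∑ i, v i = k},
                      ∏ l, UU h s j l' (|s-3|) l (v.1 l))) ^ 2) ^ ((1:ℝ)/2) :=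
                  l2_finset _ _
              _ ≤ ∑ l' ∈ univ.erase j, ((1+κ)^N * ∏ l, G l) :=
                  Finset.sum_le_sum fun l' hl' => hPσ l' (Finset.mem_erase.1 hl').1
              _ ≤ (N:ℝ≥0∞) * ((1+κ)^N * ∏ l, G l) := by
                  rw [Finset.sum_const, nsmul_eq_mul]
                  apply mul_le_mul_left
                  have hcd : (univ.erase j).card ≤ N := by
                    rw [Finset.card_erase_of_mem (mem_univ j), Finset.card_univ,
                      Fintype.card_fin]
                    omega
                  exact_mod_cast Nat.cast_le.2 hcd
      _ = (CC * (1+κ)^N + CC * ((N:ℝ≥0∞) * (1+κ)^N)) * ∏ l, G l := by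
          ring

end St10



namespace St10

open Finset

lemma main_est {N : ℕ} (hN : 1 ≤ N) {s : ℝ} (hs : 3/2 ≤ s) :
    ∃ D : ℝ≥0∞, D ≠ ⊤ ∧ ∀ h : Fin N → ℤ → ℝ≥0∞,
      (∑' k : ℤ, (Jb k ^ (s-3) * ∑' v : {v : Fin N → ℤ // ∑ i, v i = k},
          Jb (((Finset.univ.sup fun j : Fin N => (v.1 j).natAbs) : ℕ) : ℤ) ^ (3:ℝ)
            * ∏ l, h l (v.1 l)) ^ 2) ^ ((1:ℝ)/2)
        ≤ D * ∏ l, (∑' a, (Jb a ^ s * h l a) ^ 2) ^ ((1:ℝ)/2) := by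
  classical
  obtain ⟨D, hD, hstep⟩ := stepJ hN hs
  refine ⟨(N:ℝ≥0∞) * D, ENNReal.mul_ne_top (ENNReal.natCast_ne_top N) hD, fun h => ?_⟩
  haveI hNE : Nonempty (Fin N) := ⟨⟨0, by omega⟩⟩
  have hmax : ∀ v : Fin N → ℤ,
      Jb (((Finset.univ.sup fun j : Fin N => (v j).natAbs) : ℕ) : ℤ) ^ (3:ℝ)
        ≤ ∑ j, Jb (v j) ^ (3:ℝ) := by
    intro v
    obtain ⟨j₀, _, hj₀⟩ := Finset.exists_mem_eq_sup (univ : Finset (Fin N))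
      univ_nonempty (fun j => (v j).natAbs)
    rw [hj₀, Jb_natAbs]
    exact Finset.single_le_sum (f := fun j => Jb (v j) ^ (3:ℝ)) (fun _ _ => zero_le)
      (mem_univ j₀)
  have hpt : ∀ k : ℤ,
      Jb k ^ (s-3) * ∑' v : {v : Fin N → ℤ // ∑ i, v i = k},
          Jb (((Finset.univ.sup fun j : Fin N => (v.1 j).natAbs) : ℕ) : ℤ) ^ (3:ℝ)
            * ∏ l, h l (v.1 l)
        ≤ ∑ j, (Jb k ^ (s-3) * ∑' v : {v : Fin N → ℤ // ∑ i, v i = k},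
            Jb (v.1 j) ^ (3:ℝ) * ∏ l, h l (v.1 l)) := by
    intro k
    rw [← ENNReal.tsum_mul_left]
    calc ∑' v : {v : Fin N → ℤ // ∑ i, v i = k},
          Jb k ^ (s-3) * (Jb (((Finset.univ.sup fun j : Fin N => (v.1 j).natAbs) : ℕ) : ℤ) ^ (3:ℝ)
            * ∏ l, h l (v.1 l))
        ≤ ∑' v : {v : Fin N → ℤ // ∑ i, v i = k},
            Jb k ^ (s-3) * ((∑ j, Jb (v.1 j) ^ (3:ℝ)) * ∏ l, h l (v.1 l)) :=
          ENNReal.tsum_le_tsum fun v =>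
            mul_le_mul_right (mul_le_mul_left (hmax v.1) _) _
      _ = ∑' v : {v : Fin N → ℤ // ∑ i, v i = k},
            ∑ j, (Jb k ^ (s-3) * (Jb (v.1 j) ^ (3:ℝ) * ∏ l, h l (v.1 l))) := by
          apply tsum_congr; intro v
          rw [Finset.sum_mul, Finset.mul_sum]
      _ = ∑ j, ∑' v : {v : Fin N → ℤ // ∑ i, v i = k},
            (Jb k ^ (s-3) * (Jb (v.1 j) ^ (3:ℝ) * ∏ l, h l (v.1 l))) :=
          Summable.tsum_finsetSum fun j _ => ENNReal.summable
      _ = ∑ j, (Jb k ^ (s-3) * ∑' v : {v : Fin N → ℤ // ∑ i, v i = k},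
            Jb (v.1 j) ^ (3:ℝ) * ∏ l, h l (v.1 l)) :=
          Finset.sum_congr rfl fun j _ => ENNReal.tsum_mul_left
  calc (∑' k : ℤ, (Jb k ^ (s-3) * ∑' v : {v : Fin N → ℤ // ∑ i, v i = k},
          Jb (((Finset.univ.sup fun j : Fin N => (v.1 j).natAbs) : ℕ) : ℤ) ^ (3:ℝ)
            * ∏ l, h l (v.1 l)) ^ 2) ^ ((1:ℝ)/2)
      ≤ (∑' k : ℤ, (∑ j, (Jb k ^ (s-3) * ∑' v : {v : Fin N → ℤ // ∑ i, v i = k},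
          Jb (v.1 j) ^ (3:ℝ) * ∏ l, h l (v.1 l))) ^ 2) ^ ((1:ℝ)/2) :=
        l2_mono _ _ hpt
    _ ≤ ∑ j, (∑' k : ℤ, ((Jb k ^ (s-3) * ∑' v : {v : Fin N → ℤ // ∑ i, v i = k},
          Jb (v.1 j) ^ (3:ℝ) * ∏ l, h l (v.1 l))) ^ 2) ^ ((1:ℝ)/2) :=
        l2_finset univ _
    _ ≤ ∑ j : Fin N, (D * ∏ l, (∑' a, (Jb a ^ s * h l a) ^ 2) ^ ((1:ℝ)/2)) :=
        Finset.sum_le_sum fun j _ => hstep h j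
    _ = (N:ℝ≥0∞) * D * ∏ l, (∑' a, (Jb a ^ s * h l a) ^ 2) ^ ((1:ℝ)/2) := by
        rw [Finset.sum_const, Finset.card_univ, Fintype.card_fin, nsmul_eq_mul]
        ring

lemma wnorm_eq (t : ℝ) (g : ℤ → ℝ≥0∞) :
    wnorm t g = (∑' k : ℤ, (Jb k ^ t * g k) ^ 2) ^ ((1:ℝ)/2) := by
  unfold wnorm
  congr 1
  apply tsum_congr; intro k
  rw [Jb_rpow k (2*t), ← Jb_rpow_sq k t, ← mul_pow]

end St10

theorem stmt10 (s : ℝ) (hs : 3 / 2 ≤ s) (N : ℕ) (hN : 1 ≤ N) :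
    ∃ C : ℝ, 0 < C ∧
      ∀ f : Fin N → ℤ → ℂ,
        wnorm (s - 3) (fun k =>
          ∑' v : { v : Fin N → ℤ // ∑ j, v j = k },
            ENNReal.ofReal
                (jbr (((Finset.univ.sup fun j : Fin N => (v.1 j).natAbs) : ℕ) : ℤ) ^ (3 : ℝ)) *
              ∏ l, (‖f l (v.1 l)‖₊ : ℝ≥0∞)) ≤
          ENNReal.ofReal C * ∏ l, hnorm s (f l) := by
  obtain ⟨D, hD, hmain⟩ := St10.main_est hN hs
  refine ⟨D.toReal + 1, by positivity, fun f => ?_⟩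
  have hh := hmain (fun l k => (‖f l k‖₊ : ℝ≥0∞))
  have hL : wnorm (s - 3) (fun k =>
      ∑' v : { v : Fin N → ℤ // ∑ j, v j = k },
        ENNReal.ofReal
            (jbr (((Finset.univ.sup fun j : Fin N => (v.1 j).natAbs) : ℕ) : ℤ) ^ (3 : ℝ)) *
          ∏ l, (‖f l (v.1 l)‖₊ : ℝ≥0∞))
      = (∑' k : ℤ, (St10.Jb k ^ (s-3) * ∑' v : {v : Fin N → ℤ // ∑ i, v i = k},
          St10.Jb (((Finset.univ.sup fun j : Fin N => (v.1 j).natAbs) : ℕ) : ℤ) ^ (3:ℝ)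
            * ∏ l, (‖f l (v.1 l)‖₊ : ℝ≥0∞)) ^ 2) ^ ((1:ℝ)/2) := by
    rw [St10.wnorm_eq]
    congr 1
    apply tsum_congr; intro k
    congr 2
    apply tsum_congr; intro v
    rw [St10.Jb_rpow]
  have hR : ∀ l, hnorm s (f l)
      = (∑' a : ℤ, (St10.Jb a ^ s * (‖f l a‖₊ : ℝ≥0∞)) ^ 2) ^ ((1:ℝ)/2) := by
    intro l
    unfold hnorm
    rw [St10.wnorm_eq]
  rw [hL]
  calc (∑' k : ℤ, (St10.Jb k ^ (s-3) * ∑' v : {v : Fin N → ℤ // ∑ i, v i = k},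
          St10.Jb (((Finset.univ.sup fun j : Fin N => (v.1 j).natAbs) : ℕ) : ℤ) ^ (3:ℝ)
            * ∏ l, (‖f l (v.1 l)‖₊ : ℝ≥0∞)) ^ 2) ^ ((1:ℝ)/2)
      ≤ D * ∏ l, (∑' a : ℤ, (St10.Jb a ^ s * (‖f l a‖₊ : ℝ≥0∞)) ^ 2) ^ ((1:ℝ)/2) := hh
    _ ≤ ENNReal.ofReal (D.toReal + 1) * ∏ l, hnorm s (f l) := by
        have he : ENNReal.ofReal (D.toReal + 1) = D + 1 := by
          rw [ENNReal.ofReal_add ENNReal.toReal_nonneg zero_le_one,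
            ENNReal.ofReal_toReal hD, ENNReal.ofReal_one]
        rw [he]
        apply mul_le_mul (le_add_right le_rfl) _ zero_le zero_le
        apply le_of_eq
        exact Finset.prod_congr rfl fun l _ => (hR l).symm
end

section
/- Let s > 1 be a real number, N ≥ 1 an integer, and m ∈ {1,…,N}. There exists a constant C > 0 (depending only on s and N) such that for all functions f₁,…,f_N : ℤ → ℂ, ‖ k ↦ Σ_{(k₁,…,k_N)∈ℤ^N, k₁+⋯+k_N=k} ⟨k⟩^{−1} ⟨k_max⟩^{−2} · Π_{l=1}^N |f_l(k_l)| ‖_{ℓ²_s} ≤ C · ‖f_m‖_{ℓ²_{s−3}} · Π_{l∈{1,…,N}\{m}} ‖f_l‖_{ℓ²_s}, where k_max = max_{1≤j≤N}|k_j| and the weight ⟨k⟩^{−1} is evaluated at the output frequency k = k₁+⋯+k_N. -/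
open scoped BigOperators ENNReal NNReal

lemma jbr_pos (k : ℤ) : 0 < jbr k := Real.sqrt_pos.2 (by positivity)

lemma one_le_jbr (k : ℤ) : 1 ≤ jbr k := by
  rw [show (1:ℝ) = Real.sqrt 1 by simp [Real.sqrt_one]]
  exact Real.sqrt_le_sqrt (by nlinarith [sq_nonneg ((k:ℝ))])

lemma abs_le_jbr (k : ℤ) : |(k:ℝ)| ≤ jbr k := by
  rw [show |(k:ℝ)| = Real.sqrt ((k:ℝ)^2) by rw [Real.sqrt_sq_eq_abs]]
  exact Real.sqrt_le_sqrt (by nlinarith)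

lemma jbr_le_one_add (k : ℤ) : jbr k ≤ 1 + |(k:ℝ)| := by
  rw [show (1:ℝ) + |(k:ℝ)| = Real.sqrt ((1 + |(k:ℝ)|)^2) by
    rw [Real.sqrt_sq (by positivity)]]
  apply Real.sqrt_le_sqrt
  nlinarith [abs_nonneg (k:ℝ), sq_abs (k:ℝ)]

lemma jbr_mono {a b : ℤ} (h : a.natAbs ≤ b.natAbs) : jbr a ≤ jbr b := by
  apply Real.sqrt_le_sqrt
  have h2 : |(a:ℝ)| ≤ |(b:ℝ)| := by
    have h3 : (a.natAbs : ℝ) ≤ (b.natAbs : ℝ) := by exact_mod_cast h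
    calc |(a:ℝ)| = (a.natAbs : ℝ) := by simp [Nat.cast_natAbs]
      _ ≤ (b.natAbs : ℝ) := h3
      _ = |(b:ℝ)| := by simp [Nat.cast_natAbs]
  nlinarith [sq_abs (a:ℝ), sq_abs (b:ℝ), abs_nonneg (a:ℝ)]

noncomputable def Jb (k : ℤ) : ℝ≥0∞ := ENNReal.ofReal (jbr k)

lemma Jb_ne_zero (k : ℤ) : Jb k ≠ 0 := by
  simp [Jb, ENNReal.ofReal_eq_zero, not_le, jbr_pos k]

lemma Jb_ne_top (k : ℤ) : Jb k ≠ ⊤ := ENNReal.ofReal_ne_top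

lemma one_le_Jb (k : ℤ) : 1 ≤ Jb k := by
  rw [Jb, show (1:ℝ≥0∞) = ENNReal.ofReal 1 by simp]
  exact ENNReal.ofReal_le_ofReal (one_le_jbr k)

lemma ofReal_jbr_rpow (k : ℤ) (t : ℝ) :
    ENNReal.ofReal (jbr k ^ t) = Jb k ^ t :=
  (ENNReal.ofReal_rpow_of_pos (jbr_pos k)).symm

lemma Jb_mono {a b : ℤ} (h : a.natAbs ≤ b.natAbs) : Jb a ≤ Jb b :=
  ENNReal.ofReal_le_ofReal (jbr_mono h)

/-- Cauchy–Schwarz for `tsum` in `ℝ≥0∞` over a countable type. -/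
lemma tsum_cs {α : Type*} [Countable α] (f g : α → ℝ≥0∞) :
    ∑' a, f a * g a ≤ (∑' a, f a ^ (2:ℕ)) ^ ((1:ℝ)/2) * (∑' a, g a ^ (2:ℕ)) ^ ((1:ℝ)/2) := by
  let _ : MeasurableSpace α := ⊤
  have hsc : MeasurableSingletonClass α := ⟨fun _ => trivial⟩
  have h := ENNReal.lintegral_mul_le_Lp_mul_Lq (MeasureTheory.Measure.count : MeasureTheory.Measure α)
    (Real.holderConjugate_iff_eq_conjExponent (by norm_num) |>.mpr (by norm_num) :
      Real.HolderConjugate 2 2)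
    (f := f) (g := g) (Measurable.aemeasurable (measurable_of_countable f))
    (Measurable.aemeasurable (measurable_of_countable g))
  simp only [MeasureTheory.lintegral_count, Pi.mul_apply] at h
  calc ∑' a, f a * g a ≤ (∑' a, f a ^ (2:ℝ)) ^ ((1:ℝ)/2) * (∑' a, g a ^ (2:ℝ)) ^ ((1:ℝ)/2) := h
    _ = _ := by norm_num [ENNReal.rpow_natCast]

lemma Jb_tsum_ne_top {t : ℝ} (ht : 1 < t) : (∑' n : ℤ, Jb n ^ (-t)) ≠ ⊤ := by
  have hw : Summable (fun n : ℤ => |(n:ℝ)| ^ (-t) + (if n = 0 then (1:ℝ) else 0)) :=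
    (Real.summable_abs_int_rpow ht).add
      (summable_of_ne_finset_zero (s := {0}) (by intro n hn; simp at hn; simp [hn]))
  have hle : ∀ n : ℤ, jbr n ^ (-t) ≤ |(n:ℝ)| ^ (-t) + (if n = 0 then (1:ℝ) else 0) := by
    intro n
    by_cases hn : n = 0
    · subst hn
      simp only [if_pos rfl]
      have : jbr 0 = 1 := by simp [jbr]
      rw [this, Real.one_rpow, Int.cast_zero, abs_zero, Real.zero_rpow (by linarith)]
      norm_num
    · have h0 : (0:ℝ) < |(n:ℝ)| := by
        simp only [abs_pos, ne_eq, Int.cast_eq_zero]; exact hn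
      have := Real.rpow_le_rpow_of_nonpos h0 (abs_le_jbr n) (by linarith : -t ≤ 0)
      simp only [if_neg hn, add_zero]; exact this
  apply ne_top_of_le_ne_top (b := ∑' n : ℤ, ENNReal.ofReal (|(n:ℝ)| ^ (-t) + (if n = 0 then (1:ℝ) else 0)))
  · rw [(ENNReal.ofReal_tsum_of_nonneg (fun n => by positivity) hw).symm]
    exact ENNReal.ofReal_ne_top
  calc ∑' n : ℤ, Jb n ^ (-t)
      = ∑' n : ℤ, ENNReal.ofReal (jbr n ^ (-t)) := by
        exact tsum_congr fun n => (ofReal_jbr_rpow n (-t)).symm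
    _ ≤ ∑' n : ℤ, ENNReal.ofReal (|(n:ℝ)| ^ (-t) + (if n = 0 then (1:ℝ) else 0)) :=
        ENNReal.tsum_le_tsum fun n => ENNReal.ofReal_le_ofReal (hle n)

lemma tsum_pi_prod_fin : ∀ (n : ℕ) (g : Fin n → ℤ → ℝ≥0∞),
    ∑' w : Fin n → ℤ, ∏ i, g i (w i) = ∏ i, ∑' x : ℤ, g i x := by
  intro n
  induction n with
  | zero =>
    intro g
    simp only [Finset.univ_eq_empty, Finset.prod_empty]
    exact tsum_eq_single (fun i => i.elim0) (fun b hb => absurd (Subsingleton.elim b _) hb)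
  | succ n ih =>
    intro g
    rw [← (Fin.consEquiv (fun _ : Fin (n+1) => ℤ)).tsum_eq]
    have : ∀ p : ℤ × (Fin n → ℤ),
        ∏ i, g i ((Fin.consEquiv (fun _ : Fin (n+1) => ℤ)) p i) =
          g 0 p.1 * ∏ i : Fin n, g i.succ (p.2 i) := by
      intro p
      rw [Fin.prod_univ_succ]
      simp [Fin.consEquiv]
    calc ∑' p : ℤ × (Fin n → ℤ), ∏ i, g i ((Fin.consEquiv (fun _ : Fin (n+1) => ℤ)) p i)
        = ∑' p : ℤ × (Fin n → ℤ), g 0 p.1 * ∏ i : Fin n, g i.succ (p.2 i) := tsum_congr this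
      _ = ∑' x : ℤ, ∑' w : Fin n → ℤ, g 0 x * ∏ i : Fin n, g i.succ (w i) :=
          ENNReal.tsum_prod (f := fun (x:ℤ) (w : Fin n → ℤ) => g 0 x * ∏ i : Fin n, g i.succ (w i))
      _ = (∑' x : ℤ, g 0 x) * ∑' w : Fin n → ℤ, ∏ i : Fin n, g i.succ (w i) := by
          rw [← ENNReal.tsum_mul_right]
          exact tsum_congr fun x => ENNReal.tsum_mul_left
      _ = (∑' x : ℤ, g 0 x) * ∏ i : Fin n, ∑' x : ℤ, g i.succ x := by rw [ih]
      _ = ∏ i, ∑' x : ℤ, g i x := (Fin.prod_univ_succ (fun i => ∑' x : ℤ, g i x)).symm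

lemma tsum_pi_prod {ι : Type*} [Fintype ι] (g : ι → ℤ → ℝ≥0∞) :
    ∑' w : ι → ℤ, ∏ i, g i (w i) = ∏ i, ∑' x : ℤ, g i x := by
  classical
  let e := (Fintype.equivFin ι)
  let E : (ι → ℤ) ≃ (Fin (Fintype.card ι) → ℤ) := Equiv.arrowCongr e (Equiv.refl ℤ)
  rw [← E.symm.tsum_eq]
  have h1 : ∀ w : Fin (Fintype.card ι) → ℤ,
      ∏ i, g i (E.symm w i) = ∏ j, g (e.symm j) (w j) := by
    intro w
    rw [← e.prod_comp (fun j => g (e.symm j) (w j))]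
    simp [E, Equiv.arrowCongr]
  rw [tsum_congr h1, tsum_pi_prod_fin, ← e.prod_comp (fun j => ∑' x : ℤ, g (e.symm j) x)]
  simp

lemma sum_split {N : ℕ} (j0 : Fin N) (u : Fin N → ℤ) :
    ∑ j, u j = u j0 + ∑ l : {l : Fin N // l ≠ j0}, u l.1 := by
  rw [← Finset.sum_subtype (Finset.univ.erase j0) (fun l => by simp) u]
  exact (Finset.add_sum_erase _ u (Finset.mem_univ j0)).symm

lemma prod_split {N : ℕ} (j0 : Fin N) (u : Fin N → ℝ≥0∞) :
    ∏ j, u j = u j0 * ∏ l : {l : Fin N // l ≠ j0}, u l.1 := by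
  rw [← Finset.prod_subtype (Finset.univ.erase j0) (fun l => by simp) u]
  exact (Finset.mul_prod_erase _ u (Finset.mem_univ j0)).symm

noncomputable def hypEquiv (N : ℕ) (j0 : Fin N) (k : ℤ) :
    {v : Fin N → ℤ // ∑ j, v j = k} ≃ ({l : Fin N // l ≠ j0} → ℤ) where
  toFun v l := v.1 l.1
  invFun w := ⟨fun l => if h : l = j0 then k - ∑ l' : {l : Fin N // l ≠ j0}, w l' else w ⟨l, h⟩, by
    rw [sum_split j0]
    rw [dif_pos rfl]
    have : ∀ l : {l : Fin N // l ≠ j0},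
        (if h : l.1 = j0 then k - ∑ l' : {l : Fin N // l ≠ j0}, w l' else w ⟨l.1, h⟩) = w l := by
      intro l; rw [dif_neg l.2]
    rw [Finset.sum_congr rfl (fun l _ => this l)]
    ring⟩
  left_inv := by
    intro v
    ext l
    by_cases h : l = j0
    · subst h
      simp only [dif_pos rfl, eq_self_iff_true, dite_true]
      have := sum_split l v.1
      rw [v.2] at this
      omega
    · simp only [dif_neg h]
  right_inv := by
    intro w
    funext l
    simp only [dif_neg l.2]

lemma conv_l2 {N : ℕ} (a : Fin N → ℤ → ℝ≥0∞) (j0 : Fin N) :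
    ∑' k : ℤ, (∑' v : {v : Fin N → ℤ // ∑ j, v j = k}, ∏ l, a l (v.1 l)) ^ (2:ℕ)
      ≤ (∑' n : ℤ, a j0 n ^ (2:ℕ)) *
        (∏ l ∈ Finset.univ.erase j0, ∑' n : ℤ, a l n) ^ (2:ℕ) := by
  classical
  set ι := {l : Fin N // l ≠ j0}
  set c : (ι → ℤ) → ℝ≥0∞ := fun w => ∏ l : ι, a l.1 (w l) with hc
  set S : (ι → ℤ) → ℤ := fun w => ∑ l : ι, w l with hS
  have sqrt_sq : ∀ x : ℝ≥0∞, (x ^ ((1:ℝ)/2)) ^ (2:ℕ) = x := by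
    intro x
    rw [← ENNReal.rpow_natCast (x ^ ((1:ℝ)/2)) 2, ← ENNReal.rpow_mul]
    norm_num
  -- rewrite inner sum via the equivalence
  have hinner : ∀ k : ℤ,
      (∑' v : {v : Fin N → ℤ // ∑ j, v j = k}, ∏ l, a l (v.1 l))
        = ∑' w : ι → ℤ, a j0 (k - S w) * c w := by
    intro k
    rw [← (hypEquiv N j0 k).symm.tsum_eq]
    refine tsum_congr fun w => ?_
    have h1 : ((hypEquiv N j0 k).symm w).1 j0 = k - S w := by
      simp only [hypEquiv, Equiv.coe_fn_symm_mk, dif_pos rfl]; rfl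
    have h2 : ∀ l : ι, ((hypEquiv N j0 k).symm w).1 l.1 = w l := by
      intro l; simp only [hypEquiv, Equiv.coe_fn_symm_mk, dif_neg l.2]; rfl
    rw [prod_split j0, h1]
    congr 1
    exact Finset.prod_congr rfl fun l _ => by rw [h2 l]
  -- Cauchy-Schwarz in each k
  have hCS : ∀ k : ℤ,
      (∑' w : ι → ℤ, a j0 (k - S w) * c w) ^ (2:ℕ)
        ≤ (∑' w : ι → ℤ, c w) * ∑' w : ι → ℤ, c w * a j0 (k - S w) ^ (2:ℕ) := by
    intro k
    have := tsum_cs (fun w : ι → ℤ => (c w) ^ ((1:ℝ)/2))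
        (fun w : ι → ℤ => (c w) ^ ((1:ℝ)/2) * a j0 (k - S w))
    have e1 : ∀ w : ι → ℤ, (c w) ^ ((1:ℝ)/2) * ((c w) ^ ((1:ℝ)/2) * a j0 (k - S w))
        = a j0 (k - S w) * c w := by
      intro w
      rw [← mul_assoc, ← pow_two ((c w) ^ ((1:ℝ)/2)), sqrt_sq]
      ring
    have e2 : ∀ w : ι → ℤ, ((c w) ^ ((1:ℝ)/2)) ^ (2:ℕ) = c w := fun w => sqrt_sq _
    have e3 : ∀ w : ι → ℤ, ((c w) ^ ((1:ℝ)/2) * a j0 (k - S w)) ^ (2:ℕ)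
        = c w * a j0 (k - S w) ^ (2:ℕ) := by
      intro w; rw [mul_pow, sqrt_sq]
    rw [tsum_congr e1, tsum_congr e2, tsum_congr e3] at this
    calc (∑' w : ι → ℤ, a j0 (k - S w) * c w) ^ (2:ℕ)
        ≤ ((∑' w : ι → ℤ, c w) ^ ((1:ℝ)/2) *
            (∑' w : ι → ℤ, c w * a j0 (k - S w) ^ (2:ℕ)) ^ ((1:ℝ)/2)) ^ (2:ℕ) :=
          pow_le_pow_left' this 2
      _ = _ := by rw [mul_pow, sqrt_sq, sqrt_sq]
  calc ∑' k : ℤ, (∑' v : {v : Fin N → ℤ // ∑ j, v j = k}, ∏ l, a l (v.1 l)) ^ (2:ℕ)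
      = ∑' k : ℤ, (∑' w : ι → ℤ, a j0 (k - S w) * c w) ^ (2:ℕ) := by
        exact tsum_congr fun k => by rw [hinner k]
    _ ≤ ∑' k : ℤ, (∑' w : ι → ℤ, c w) * ∑' w : ι → ℤ, c w * a j0 (k - S w) ^ (2:ℕ) :=
        ENNReal.tsum_le_tsum hCS
    _ = (∑' w : ι → ℤ, c w) * ∑' k : ℤ, ∑' w : ι → ℤ, c w * a j0 (k - S w) ^ (2:ℕ) :=
        ENNReal.tsum_mul_left
    _ = (∑' w : ι → ℤ, c w) * ∑' w : ι → ℤ, ∑' k : ℤ, c w * a j0 (k - S w) ^ (2:ℕ) := by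
        rw [ENNReal.tsum_comm]
    _ = (∑' w : ι → ℤ, c w) * ∑' w : ι → ℤ, c w * ∑' k : ℤ, a j0 (k - S w) ^ (2:ℕ) := by
        congr 1; exact tsum_congr fun w => ENNReal.tsum_mul_left
    _ = (∑' w : ι → ℤ, c w) * ∑' w : ι → ℤ, c w * ∑' n : ℤ, a j0 n ^ (2:ℕ) := by
        congr 1
        refine tsum_congr fun w => ?_
        congr 1
        exact (Equiv.subRight (S w)).tsum_eq (fun n => a j0 n ^ (2:ℕ))
    _ = (∑' n : ℤ, a j0 n ^ (2:ℕ)) * (∑' w : ι → ℤ, c w) ^ (2:ℕ) := by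
        rw [ENNReal.tsum_mul_right]; ring
    _ = (∑' n : ℤ, a j0 n ^ (2:ℕ)) *
        (∏ l ∈ Finset.univ.erase j0, ∑' n : ℤ, a l n) ^ (2:ℕ) := by
        congr 2
        rw [hc]
        rw [tsum_pi_prod (fun l : ι => a l.1)]
        exact (Finset.prod_subtype (Finset.univ.erase j0) (fun l => by simp)
          (fun l => ∑' n : ℤ, a l n)).symm

lemma enn_mul_le_sq (x y : ℝ≥0∞) : x * y ≤ x ^ (2:ℕ) + y ^ (2:ℕ) := by
  rcases le_total x y with h | h
  · calc x * y ≤ y * y := mul_le_mul_left h y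
      _ = y ^ (2:ℕ) := (pow_two y).symm
      _ ≤ _ := le_add_self
  · calc x * y ≤ x * x := mul_le_mul_right h x
      _ = x ^ (2:ℕ) := (pow_two x).symm
      _ ≤ _ := le_self_add

lemma sq_sum_le {N : ℕ} (x : Fin N → ℝ≥0∞) :
    (∑ j, x j) ^ (2:ℕ) ≤ (2 * N) * ∑ j, x j ^ (2:ℕ) := by
  calc (∑ j, x j) ^ (2:ℕ) = ∑ i, ∑ j, x i * x j := by
        rw [pow_two, Finset.sum_mul_sum]
    _ ≤ ∑ i, ∑ j, (x i ^ (2:ℕ) + x j ^ (2:ℕ)) :=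
        Finset.sum_le_sum fun i _ => Finset.sum_le_sum fun j _ => enn_mul_le_sq _ _
    _ = ∑ i : Fin N, (x i ^ (2:ℕ) * N + ∑ j, x j ^ (2:ℕ)) := by
        refine Finset.sum_congr rfl fun i _ => ?_
        rw [Finset.sum_add_distrib, Finset.sum_const, Finset.card_univ, Fintype.card_fin,
          nsmul_eq_mul, mul_comm]
    _ = (2 * N) * ∑ j, x j ^ (2:ℕ) := by
        rw [Finset.sum_add_distrib, Finset.sum_const, Finset.card_univ, Fintype.card_fin,
          ← Finset.sum_mul, nsmul_eq_mul]
        ring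

noncomputable def wt (s : ℝ) {N : ℕ} (m j l : Fin N) (n : ℤ) : ℝ≥0∞ :=
  if l = j then (if j = m then Jb n ^ (s-3) else Jb n ^ s)
  else if l = m then Jb n ^ (-3:ℝ) else 1

lemma wtprod_eq_self {N : ℕ} (s : ℝ) (m : Fin N) (v : Fin N → ℤ) :
    ∏ l, wt s m m l (v l) = Jb (v m) ^ (s - 3) := by
  rw [Finset.prod_eq_single m]
  · simp [wt]
  · intro l _ hl; simp [wt, hl]
  · simp

lemma wtprod_eq_other {N : ℕ} (s : ℝ) (m j : Fin N) (hj : j ≠ m) (v : Fin N → ℤ) :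
    ∏ l, wt s m j l (v l) = Jb (v j) ^ s * Jb (v m) ^ (-3:ℝ) := by
  classical
  rw [← Finset.mul_prod_erase Finset.univ _ (Finset.mem_univ j),
    ← Finset.mul_prod_erase _ _ (Finset.mem_erase.mpr ⟨Ne.symm hj, Finset.mem_univ m⟩)]
  have h1 : wt s m j j (v j) = Jb (v j) ^ s := by simp [wt, hj]
  have h2 : wt s m j m (v m) = Jb (v m) ^ (-3:ℝ) := by simp [wt, Ne.symm hj]
  have h3 : ∏ l ∈ (Finset.univ.erase j).erase m, wt s m j l (v l) = 1 := by
    apply Finset.prod_eq_one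
    intro l hl
    simp only [Finset.mem_erase] at hl
    simp [wt, hl.1, hl.2.1]
  rw [h1, h2, h3, mul_one]

lemma jbr_natAbs (n : ℤ) : jbr ((n.natAbs : ℤ)) = jbr n :=
  le_antisymm (jbr_mono (by simp [Int.natAbs_abs])) (jbr_mono (by simp [Int.natAbs_abs]))

lemma Jb_natAbs (n : ℤ) : Jb ((n.natAbs : ℤ)) = Jb n := by
  rw [Jb, Jb, jbr_natAbs]

lemma jbr_sum_le {N : ℕ} (hN : 1 ≤ N) (v : Fin N → ℤ) :
    jbr (∑ j, v j) ≤ 2 * (N:ℝ) * jbr (((Finset.univ.sup fun j => (v j).natAbs) : ℕ) : ℤ) := by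
  set K : ℤ := (((Finset.univ.sup fun j => (v j).natAbs) : ℕ) : ℤ)
  have hK : ∀ j, jbr (v j) ≤ jbr K := by
    intro j
    apply jbr_mono
    simpa [K] using Finset.le_sup (f := fun j => (v j).natAbs) (Finset.mem_univ j)
  have h1K : (1:ℝ) ≤ jbr K := one_le_jbr K
  calc jbr (∑ j, v j) ≤ 1 + |((∑ j, v j : ℤ) : ℝ)| := jbr_le_one_add _
    _ ≤ 1 + ∑ j, |((v j : ℤ) : ℝ)| := by
        push_cast
        gcongr
        exact Finset.abs_sum_le_sum_abs _ _
    _ ≤ ∑ j : Fin N, (1:ℝ) + ∑ j, |((v j : ℤ) : ℝ)| := by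
        gcongr
        simp only [Finset.sum_const, Finset.card_univ, Fintype.card_fin, nsmul_eq_mul, mul_one]
        exact_mod_cast hN
    _ = ∑ j : Fin N, (1 + |((v j : ℤ) : ℝ)|) := by rw [Finset.sum_add_distrib]
    _ ≤ ∑ j : Fin N, 2 * jbr K := by
        apply Finset.sum_le_sum
        intro j _
        have := abs_le_jbr (v j)
        have := one_le_jbr (v j)
        have := hK j
        linarith
    _ = 2 * (N:ℝ) * jbr K := by
        simp only [Finset.sum_const, Finset.card_univ, Fintype.card_fin, nsmul_eq_mul]
        ring

lemma claimA {N : ℕ} (hN : 1 ≤ N) {s : ℝ} (hs : 1 < s) (m : Fin N) (v : Fin N → ℤ) :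
    Jb (∑ j, v j) ^ s *
      ((Jb (∑ j, v j))⁻¹ *
        (Jb (((Finset.univ.sup fun j => (v j).natAbs) : ℕ) : ℤ) ^ (2:ℕ))⁻¹)
      ≤ ENNReal.ofReal ((2*(N:ℝ))^(s-1)) * ∑ j, ∏ l, wt s m j l (v l) := by
  classical
  set K : ℤ := (((Finset.univ.sup fun j => (v j).natAbs) : ℕ) : ℤ) with hKdef
  set M := Jb K with hMdef
  set k : ℤ := ∑ j, v j with hkdef
  have hM0 : M ≠ 0 := Jb_ne_zero K
  have hMt : M ≠ ⊤ := Jb_ne_top K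
  have hle_M : ∀ j, Jb (v j) ≤ M := by
    intro j
    apply Jb_mono
    simpa [K] using Finset.le_sup (f := fun j => (v j).natAbs) (Finset.mem_univ j)
  -- left side equals Jb k ^ (s-1) * M ^ (-2)
  have hM2 : (M ^ (2:ℕ))⁻¹ = M ^ (-2:ℝ) := by
    rw [show (-2:ℝ) = -((2:ℕ):ℝ) by norm_num, ENNReal.rpow_neg, ENNReal.rpow_natCast]
  have e1 : Jb k ^ s * ((Jb k)⁻¹ * (M ^ (2:ℕ))⁻¹) = Jb k ^ (s-1) * M ^ (-2:ℝ) := by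
    rw [hM2, ← ENNReal.rpow_neg_one (Jb k), ← mul_assoc,
      ← ENNReal.rpow_add s (-1) (Jb_ne_zero k) (Jb_ne_top k),
      show s + (-1) = s - 1 by ring]
  rw [e1]
  -- bound Jb k ^ (s-1)
  have e2 : Jb k ≤ ENNReal.ofReal (2*(N:ℝ)) * M := by
    rw [hMdef, Jb, Jb, ← ENNReal.ofReal_mul (by positivity)]
    exact ENNReal.ofReal_le_ofReal (jbr_sum_le hN v)
  have e3 : Jb k ^ (s-1) ≤ ENNReal.ofReal ((2*(N:ℝ))^(s-1)) * M ^ (s-1) := by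
    calc Jb k ^ (s-1) ≤ (ENNReal.ofReal (2*(N:ℝ)) * M) ^ (s-1) :=
          ENNReal.rpow_le_rpow e2 (by linarith)
      _ = ENNReal.ofReal (2*(N:ℝ)) ^ (s-1) * M ^ (s-1) :=
          ENNReal.mul_rpow_of_nonneg _ _ (by linarith)
      _ = ENNReal.ofReal ((2*(N:ℝ))^(s-1)) * M ^ (s-1) := by
          rw [← ENNReal.ofReal_rpow_of_pos (by positivity)]
  -- M ^ (s-3) ≤ sum of weight products
  have e4 : M ^ (s-1) * M ^ (-2:ℝ) = M ^ (s-3) := by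
    rw [← ENNReal.rpow_add _ _ hM0 hMt, show s - 1 + (-2) = s - 3 by ring]
  have hne : (Finset.univ : Finset (Fin N)).Nonempty := by
    have : Nonempty (Fin N) := ⟨⟨0, hN⟩⟩
    exact Finset.univ_nonempty
  obtain ⟨j0, -, hj0⟩ := Finset.exists_mem_eq_sup Finset.univ hne (fun j => (v j).natAbs)
  have hMj0 : M = Jb (v j0) := by
    rw [hMdef, hKdef, hj0, Jb_natAbs]
  have e5 : M ^ (s - 3) ≤ ∑ j, ∏ l, wt s m j l (v l) := by
    have key : M ^ (s - 3) ≤ ∏ l, wt s m j0 l (v l) := by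
      by_cases hj : j0 = m
      · subst hj
        rw [wtprod_eq_self, ← hMj0]
      · rw [wtprod_eq_other s m j0 hj]
        have h6 : M ^ (-3:ℝ) ≤ Jb (v m) ^ (-3:ℝ) := by
          rw [show (-3:ℝ) = -(3:ℝ) by norm_num, ENNReal.rpow_neg, ENNReal.rpow_neg]
          exact ENNReal.inv_le_inv.mpr (ENNReal.rpow_le_rpow (hle_M m) (by norm_num))
        calc M ^ (s-3) = M ^ s * M ^ (-3:ℝ) := by
              rw [← ENNReal.rpow_add _ _ hM0 hMt, show s + (-3) = s - 3 by ring]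
          _ ≤ Jb (v j0) ^ s * Jb (v m) ^ (-3:ℝ) := by
              rw [← hMj0]
              exact mul_le_mul_right h6 _
    exact key.trans (Finset.single_le_sum (f := fun j => ∏ l, wt s m j l (v l))
      (fun j _ => zero_le) (Finset.mem_univ j0))
  calc Jb k ^ (s-1) * M ^ (-2:ℝ)
      ≤ (ENNReal.ofReal ((2*(N:ℝ))^(s-1)) * M ^ (s-1)) * M ^ (-2:ℝ) :=
        mul_le_mul_left e3 _
    _ = ENNReal.ofReal ((2*(N:ℝ))^(s-1)) * (M ^ (s-1) * M ^ (-2:ℝ)) := by ring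
    _ = ENNReal.ofReal ((2*(N:ℝ))^(s-1)) * M ^ (s-3) := by rw [e4]
    _ ≤ _ := mul_le_mul_right e5 _

lemma rpow_sq (x : ℝ≥0∞) (t : ℝ) : (x ^ t) ^ (2:ℕ) = x ^ (2*t) := by
  rw [← ENNReal.rpow_natCast (x ^ t) 2, ← ENNReal.rpow_mul]
  congr 1
  push_cast
  ring

lemma sqrt_sq' (x : ℝ≥0∞) : (x ^ ((1:ℝ)/2)) ^ (2:ℕ) = x := by
  rw [← ENNReal.rpow_natCast (x ^ ((1:ℝ)/2)) 2, ← ENNReal.rpow_mul]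
  norm_num

lemma hnorm_sq (t : ℝ) (f : ℤ → ℂ) :
    hnorm t f ^ (2:ℕ) = ∑' n : ℤ, Jb n ^ (2*t) * (‖f n‖₊ : ℝ≥0∞) ^ (2:ℕ) := by
  rw [hnorm, wnorm, sqrt_sq']
  exact tsum_congr fun n => by rw [ofReal_jbr_rpow]

lemma l1_le {s : ℝ} (t : ℝ) (h : ℤ → ℝ≥0∞) :
    ∑' n : ℤ, Jb n ^ t * h n ≤
      (∑' n : ℤ, Jb n ^ (-(2*s))) ^ ((1:ℝ)/2) *
        (∑' n : ℤ, Jb n ^ (2*(s+t)) * h n ^ (2:ℕ)) ^ ((1:ℝ)/2) := by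
  have hcs := tsum_cs (fun n : ℤ => Jb n ^ (-s)) (fun n : ℤ => Jb n ^ (s+t) * h n)
  have e1 : ∀ n : ℤ, Jb n ^ (-s) * (Jb n ^ (s+t) * h n) = Jb n ^ t * h n := by
    intro n
    rw [← mul_assoc, ← ENNReal.rpow_add _ _ (Jb_ne_zero n) (Jb_ne_top n),
      show -s + (s+t) = t by ring]
  have e2 : ∀ n : ℤ, (Jb n ^ (-s)) ^ (2:ℕ) = Jb n ^ (-(2*s)) := by
    intro n; rw [rpow_sq, show 2*(-s) = -(2*s) by ring]
  have e3 : ∀ n : ℤ, (Jb n ^ (s+t) * h n) ^ (2:ℕ) = Jb n ^ (2*(s+t)) * h n ^ (2:ℕ) := by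
    intro n; rw [mul_pow, rpow_sq]
  rw [tsum_congr e1, tsum_congr e2, tsum_congr e3] at hcs
  exact hcs

lemma sq_sqrt' (x : ℝ≥0∞) : (x ^ (2:ℕ)) ^ ((1:ℝ)/2) = x := by
  rw [← ENNReal.rpow_natCast x 2, ← ENNReal.rpow_mul]
  norm_num

lemma hnorm_eq (t : ℝ) (f : ℤ → ℂ) :
    hnorm t f = (∑' n : ℤ, Jb n ^ (2*t) * (‖f n‖₊ : ℝ≥0∞) ^ (2:ℕ)) ^ ((1:ℝ)/2) := by
  rw [← hnorm_sq, sq_sqrt']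

lemma ofReal_weight (k K : ℤ) :
    ENNReal.ofReal ((jbr k)⁻¹ * (jbr K ^ 2)⁻¹) = (Jb k)⁻¹ * (Jb K ^ (2:ℕ))⁻¹ := by
  rw [Jb, Jb, ENNReal.ofReal_mul (inv_nonneg.mpr (jbr_pos k).le),
    ENNReal.ofReal_inv_of_pos (jbr_pos k),
    ENNReal.ofReal_inv_of_pos (pow_pos (jbr_pos K) 2),
    ENNReal.ofReal_pow (jbr_pos K).le]

theorem stmt11 (s : ℝ) (hs : 1 < s) (N : ℕ) (hN : 1 ≤ N) (m : Fin N) :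
    ∃ C : ℝ, 0 < C ∧
      ∀ f : Fin N → ℤ → ℂ,
        wnorm s (fun k =>
          ∑' v : { v : Fin N → ℤ // ∑ j, v j = k },
            ENNReal.ofReal
                ((jbr k)⁻¹ *
                  (jbr (((Finset.univ.sup fun j : Fin N => (v.1 j).natAbs) : ℕ) : ℤ) ^ 2)⁻¹) *
              ∏ l, (‖f l (v.1 l)‖₊ : ℝ≥0∞)) ≤
          ENNReal.ofReal C * hnorm (s - 3) (f m) *
            ∏ l ∈ Finset.univ.erase m, hnorm s (f l) := by
  classical
  set Q : ℝ≥0∞ := (∑' n : ℤ, Jb n ^ (-(2*s))) ^ ((1:ℝ)/2) with hQ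
  have hQt : Q ≠ ⊤ :=
    ENNReal.rpow_ne_top_of_nonneg (by norm_num) (Jb_tsum_ne_top (by linarith))
  set c₁ : ℝ≥0∞ := ENNReal.ofReal ((2*(N:ℝ))^(s-1)) with hc₁
  set D : ℝ≥0∞ := (c₁ ^ (2:ℕ) * ((2 * N * N : ℕ) : ℝ≥0∞)) ^ ((1:ℝ)/2) * Q ^ (N-1) with hD
  have hDt : D ≠ ⊤ := by
    apply ENNReal.mul_ne_top
    · exact ENNReal.rpow_ne_top_of_nonneg (by norm_num)
        (ENNReal.mul_ne_top (ENNReal.pow_ne_top ENNReal.ofReal_ne_top)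
          (ENNReal.natCast_ne_top _))
    · exact ENNReal.pow_ne_top hQt
  refine ⟨D.toReal + 1, by positivity, ?_⟩
  intro f
  set h : Fin N → ℤ → ℝ≥0∞ := fun l n => (‖f l n‖₊ : ℝ≥0∞) with hh
  set a : Fin N → Fin N → ℤ → ℝ≥0∞ := fun j l n => wt s m j l n * h l n with ha
  set T : ℝ≥0∞ := hnorm (s-3) (f m) * ∏ l ∈ Finset.univ.erase m, hnorm s (f l) with hT
  -- the ℓ² slots
  have hL2 : ∀ j : Fin N, (∑' n : ℤ, a j j n ^ (2:ℕ)) =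
      (if j = m then hnorm (s-3) (f m) else hnorm s (f j)) ^ (2:ℕ) := by
    intro j
    by_cases hj : j = m
    · subst hj
      rw [if_pos rfl, hnorm_sq]
      refine tsum_congr fun n => ?_
      have e : a j j n = Jb n ^ (s-3) * h j n := by simp [ha, wt]
      rw [e, mul_pow, rpow_sq]
    · rw [if_neg hj, hnorm_sq]
      refine tsum_congr fun n => ?_
      have e : a j j n = Jb n ^ s * h j n := by simp [ha, wt, hj]
      rw [e, mul_pow, rpow_sq]
  -- the ℓ¹ slots
  have hL1 : ∀ j l : Fin N, l ≠ j →
      (∑' n : ℤ, a j l n) ≤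
        Q * (if l = m then hnorm (s-3) (f m) else hnorm s (f l)) := by
    intro j l hl
    by_cases hlm : l = m
    · subst hlm
      rw [if_pos rfl]
      have hw : ∀ n, a j l n = Jb n ^ (-3:ℝ) * h l n := by
        intro n; simp [ha, wt, hl]
      rw [tsum_congr hw]
      refine (l1_le (s := s) (-3:ℝ) (h l)).trans (mul_le_mul_right (le_of_eq ?_) Q)
      rw [show s + (-3:ℝ) = s - 3 by ring, hnorm_eq]
    · rw [if_neg hlm]
      have hw : ∀ n, a j l n = Jb n ^ (0:ℝ) * h l n := by
        intro n; simp [ha, wt, hl, hlm, ENNReal.rpow_zero]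
      rw [tsum_congr hw]
      refine (l1_le (s := s) (0:ℝ) (h l)).trans (mul_le_mul_right (le_of_eq ?_) Q)
      rw [show s + (0:ℝ) = s by ring, hnorm_eq]
  -- per-j product bound
  have hPj : ∀ j : Fin N,
      (∑' n : ℤ, a j j n ^ (2:ℕ)) *
        (∏ l ∈ Finset.univ.erase j, ∑' n : ℤ, a j l n) ^ (2:ℕ) ≤
        (Q ^ (N-1) * T) ^ (2:ℕ) := by
    intro j
    set u : ℝ≥0∞ := if j = m then hnorm (s-3) (f m) else hnorm s (f j) with hu
    set t : Fin N → ℝ≥0∞ := fun l => if l = m then hnorm (s-3) (f m) else hnorm s (f l)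
      with htdef
    have h1 : (∏ l ∈ Finset.univ.erase j, ∑' n : ℤ, a j l n) ≤
        Q ^ (N-1) * ∏ l ∈ Finset.univ.erase j, t l := by
      calc ∏ l ∈ Finset.univ.erase j, ∑' n : ℤ, a j l n
          ≤ ∏ l ∈ Finset.univ.erase j, (Q * t l) :=
            Finset.prod_le_prod' fun l hl => hL1 j l (Finset.ne_of_mem_erase hl)
        _ = Q ^ (Finset.univ.erase j).card * ∏ l ∈ Finset.univ.erase j, t l := by
            rw [Finset.prod_mul_distrib, Finset.prod_const]
        _ = Q ^ (N-1) * ∏ l ∈ Finset.univ.erase j, t l := by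
            rw [Finset.card_erase_of_mem (Finset.mem_univ j), Finset.card_univ,
              Fintype.card_fin]
    have h2 : u * ∏ l ∈ Finset.univ.erase j, t l = T := by
      by_cases hj : j = m
      · subst hj
        rw [hT, hu, if_pos rfl]
        congr 1
        exact Finset.prod_congr rfl fun l hl => by
          rw [htdef]; exact if_neg (Finset.ne_of_mem_erase hl)
      · have hmem : m ∈ Finset.univ.erase j :=
          Finset.mem_erase.mpr ⟨fun hc => hj hc.symm, Finset.mem_univ m⟩
        rw [← Finset.mul_prod_erase _ t hmem]
        have htm : t m = hnorm (s-3) (f m) := by rw [htdef]; exact if_pos rfl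
        have hrest : ∏ l ∈ (Finset.univ.erase j).erase m, t l =
            ∏ l ∈ (Finset.univ.erase j).erase m, hnorm s (f l) := by
          refine Finset.prod_congr rfl fun l hl => ?_
          rw [htdef]
          exact if_neg (Finset.ne_of_mem_erase hl)
        have hjm : j ∈ Finset.univ.erase m :=
          Finset.mem_erase.mpr ⟨hj, Finset.mem_univ j⟩
        have hswap : (Finset.univ.erase j).erase m = (Finset.univ.erase m).erase j := by
          ext x
          simp only [Finset.mem_erase, Finset.mem_univ, and_true]
          tauto
        rw [htm, hrest, hu, if_neg hj, hT, hswap]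
        rw [← Finset.mul_prod_erase _ (fun l => hnorm s (f l)) hjm]
        ring
    calc (∑' n : ℤ, a j j n ^ (2:ℕ)) *
          (∏ l ∈ Finset.univ.erase j, ∑' n : ℤ, a j l n) ^ (2:ℕ)
        ≤ u ^ (2:ℕ) * (Q ^ (N-1) * ∏ l ∈ Finset.univ.erase j, t l) ^ (2:ℕ) := by
          rw [hL2 j]
          exact mul_le_mul_right (pow_le_pow_left' h1 2) _
      _ = (Q ^ (N-1) * (u * ∏ l ∈ Finset.univ.erase j, t l)) ^ (2:ℕ) := by ring
      _ = (Q ^ (N-1) * T) ^ (2:ℕ) := by rw [h2]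
  -- pointwise bound with claimA
  set G : ℤ → ℝ≥0∞ := fun k =>
    ∑' v : { v : Fin N → ℤ // ∑ j, v j = k },
      ENNReal.ofReal
          ((jbr k)⁻¹ *
            (jbr (((Finset.univ.sup fun j : Fin N => (v.1 j).natAbs) : ℕ) : ℤ) ^ 2)⁻¹) *
        ∏ l, (‖f l (v.1 l)‖₊ : ℝ≥0∞) with hG
  have hpt : ∀ k : ℤ, Jb k ^ s * G k ≤
      c₁ * ∑ j, ∑' v : { v : Fin N → ℤ // ∑ j, v j = k }, ∏ l, a j l (v.1 l) := by
    intro k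
    rw [hG, ← ENNReal.tsum_mul_left]
    have hv : ∀ v : { v : Fin N → ℤ // ∑ j, v j = k },
        Jb k ^ s *
          (ENNReal.ofReal
              ((jbr k)⁻¹ *
                (jbr (((Finset.univ.sup fun j : Fin N => (v.1 j).natAbs) : ℕ) : ℤ) ^ 2)⁻¹) *
            ∏ l, (‖f l (v.1 l)‖₊ : ℝ≥0∞)) ≤
          c₁ * ∑ j, ∏ l, a j l (v.1 l) := by
      intro v
      rw [ofReal_weight, ← mul_assoc]
      have hA := claimA hN hs m v.1
      rw [v.2] at hA
      calc Jb k ^ s *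
            ((Jb k)⁻¹ *
              (Jb (((Finset.univ.sup fun j : Fin N => (v.1 j).natAbs) : ℕ) : ℤ) ^ (2:ℕ))⁻¹) *
            ∏ l, (‖f l (v.1 l)‖₊ : ℝ≥0∞)
          ≤ (c₁ * ∑ j, ∏ l, wt s m j l (v.1 l)) * ∏ l, (‖f l (v.1 l)‖₊ : ℝ≥0∞) :=
            mul_le_mul_left hA _
        _ = c₁ * ∑ j, ∏ l, a j l (v.1 l) := by
            rw [mul_assoc, Finset.sum_mul]
            congr 1
            refine Finset.sum_congr rfl fun j _ => ?_
            rw [← Finset.prod_mul_distrib]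
    calc ∑' v : { v : Fin N → ℤ // ∑ j, v j = k }, Jb k ^ s * _
        ≤ ∑' v : { v : Fin N → ℤ // ∑ j, v j = k }, c₁ * ∑ j, ∏ l, a j l (v.1 l) :=
          ENNReal.tsum_le_tsum hv
      _ = c₁ * ∑' v : { v : Fin N → ℤ // ∑ j, v j = k }, ∑ j, ∏ l, a j l (v.1 l) :=
          ENNReal.tsum_mul_left
      _ = c₁ * ∑ j, ∑' v : { v : Fin N → ℤ // ∑ j, v j = k }, ∏ l, a j l (v.1 l) := by
          rw [Summable.tsum_finsetSum fun j _ => ENNReal.summable]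
  -- main chain
  have hmain : ∑' k : ℤ, (Jb k ^ s * G k) ^ (2:ℕ) ≤
      c₁ ^ (2:ℕ) * ((2 * N * N : ℕ) : ℝ≥0∞) * (Q ^ (N-1) * T) ^ (2:ℕ) := by
    calc ∑' k : ℤ, (Jb k ^ s * G k) ^ (2:ℕ)
        ≤ ∑' k : ℤ, (c₁ * ∑ j, ∑' v : { v : Fin N → ℤ // ∑ j, v j = k },
            ∏ l, a j l (v.1 l)) ^ (2:ℕ) :=
          ENNReal.tsum_le_tsum fun k => pow_le_pow_left' (hpt k) 2
      _ = c₁ ^ (2:ℕ) * ∑' k : ℤ, (∑ j, ∑' v : { v : Fin N → ℤ // ∑ j, v j = k },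
            ∏ l, a j l (v.1 l)) ^ (2:ℕ) := by
          rw [← ENNReal.tsum_mul_left]
          exact tsum_congr fun k => by rw [mul_pow]
      _ ≤ c₁ ^ (2:ℕ) * ∑' k : ℤ, (2 * (N : ℝ≥0∞)) *
            ∑ j, (∑' v : { v : Fin N → ℤ // ∑ j, v j = k }, ∏ l, a j l (v.1 l)) ^ (2:ℕ) :=
          mul_le_mul_right (ENNReal.tsum_le_tsum fun k => sq_sum_le _) _
      _ = c₁ ^ (2:ℕ) * ((2 * (N : ℝ≥0∞)) *
            ∑ j, ∑' k : ℤ,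
              (∑' v : { v : Fin N → ℤ // ∑ j, v j = k }, ∏ l, a j l (v.1 l)) ^ (2:ℕ)) := by
          rw [ENNReal.tsum_mul_left, Summable.tsum_finsetSum fun j _ => ENNReal.summable]
      _ ≤ c₁ ^ (2:ℕ) * ((2 * (N : ℝ≥0∞)) * ∑ _j : Fin N, (Q ^ (N-1) * T) ^ (2:ℕ)) := by
          apply mul_le_mul_right
          apply mul_le_mul_right
          apply Finset.sum_le_sum
          intro j _
          exact ((conv_l2 (a j) j).trans (hPj j))
      _ = c₁ ^ (2:ℕ) * ((2 * N * N : ℕ) : ℝ≥0∞) * (Q ^ (N-1) * T) ^ (2:ℕ) := by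
          rw [Finset.sum_const, Finset.card_univ, Fintype.card_fin, nsmul_eq_mul]
          push_cast
          ring
  -- conclude
  have hlhs : wnorm s G = (∑' k : ℤ, (Jb k ^ s * G k) ^ (2:ℕ)) ^ ((1:ℝ)/2) := by
    rw [wnorm]
    congr 1
    refine tsum_congr fun k => ?_
    rw [ofReal_jbr_rpow, mul_pow, rpow_sq]
  calc wnorm s G = (∑' k : ℤ, (Jb k ^ s * G k) ^ (2:ℕ)) ^ ((1:ℝ)/2) := hlhs
    _ ≤ (c₁ ^ (2:ℕ) * ((2 * N * N : ℕ) : ℝ≥0∞) * (Q ^ (N-1) * T) ^ (2:ℕ)) ^ ((1:ℝ)/2) :=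
        ENNReal.rpow_le_rpow hmain (by norm_num)
    _ = (c₁ ^ (2:ℕ) * ((2 * N * N : ℕ) : ℝ≥0∞)) ^ ((1:ℝ)/2) * (Q ^ (N-1) * T) := by
        rw [ENNReal.mul_rpow_of_nonneg _ _ (by norm_num : (0:ℝ) ≤ 1/2), sq_sqrt']
    _ = D * T := by rw [hD]; ring
    _ ≤ ENNReal.ofReal (D.toReal + 1) * T := by
        apply mul_le_mul_left
        calc D = ENNReal.ofReal D.toReal := (ENNReal.ofReal_toReal hDt).symm
          _ ≤ ENNReal.ofReal (D.toReal + 1) := ENNReal.ofReal_le_ofReal (by linarith)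
    _ = ENNReal.ofReal (D.toReal + 1) * hnorm (s-3) (f m) *
          ∏ l ∈ Finset.univ.erase m, hnorm s (f l) := by
        rw [hT, mul_assoc]
end
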